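/- arXiv:2401.12112 — 11 statements merged into one kernel-verified Lean document; each statement's English description precedes it below -/
import Mathlib

section
/- Let U ⊆ ℝ^d have finite positive Lebesgue measure, and define M_U(x) = |(U-x) Δ U| and M*(U) = sup_{x ≠ 0} M_U(x)/|x|. If 0 < M*(U) < ∞, then U - U contains the open ball of radius |U|/M*(U) centered at the origin. -/
open scoped Pointwise ENNReal

open MeasureTheory

theorem steinhaus_radius_lower_bound
    {d : ℕ} (U : Set (EuclideanSpace ℝ (Fin d))) (hU : MeasurableSet U)
    (h0 : 0 < volume U) (hfin : volume U < ⊤)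
    (Mstar : ℝ≥0∞)
    (hM : Mstar = ⨆ (x : EuclideanSpace ℝ (Fin d)) (_ : x ≠ 0),
      volume (symmDiff ((fun u => u - x) '' U) U) / ‖x‖₊)
    (hMpos : 0 < Mstar) (hMfin : Mstar < ⊤) :
    Metric.ball (0 : EuclideanSpace ℝ (Fin d)) ((volume U).toReal / Mstar.toReal)
      ⊆ U - U := by
  intro x hx
  by_cases hx0 : x = 0
  · obtain ⟨a, ha⟩ := nonempty_of_measure_ne_zero h0.ne'
    have : a - a ∈ U - U := Set.sub_mem_sub ha ha
    simpa [hx0] using this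
  by_contra hxU
  -- the translate U - x is disjoint from U
  have hdisj : Disjoint ((fun u => u - x) '' U) U := by
    rw [Set.disjoint_left]
    rintro y ⟨u, hu, rfl⟩ hy
    have : u - (u - x) ∈ U - U := Set.sub_mem_sub hu hy
    simp only [sub_sub_cancel] at this
    exact hxU this
  have himgset : (fun u => u - x) '' U = (fun u => u + x) ⁻¹' U := by
    ext y
    constructor
    · rintro ⟨u, hu, rfl⟩; simpa using hu
    · intro hy; exact ⟨y + x, hy, by simp⟩
  have himg : volume ((fun u => u - x) '' U) = volume U := by
    rw [himgset, measure_preimage_add_right]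
  have hmeas : MeasurableSet ((fun u => u - x) '' U) := by
    rw [himgset]
    exact hU.preimage (measurable_add_const x)
  have hsymm : volume (symmDiff ((fun u => u - x) '' U) U) = volume U + volume U := by
    rw [hdisj.symmDiff_eq_sup]
    show volume ((fun u => u - x) '' U ∪ U) = _
    rw [measure_union hdisj hU, himg]
  have hle : volume (symmDiff ((fun u => u - x) '' U) U) / ‖x‖₊ ≤ Mstar := by
    rw [hM]
    exact le_iSup₂ (f := fun (y : EuclideanSpace ℝ (Fin d)) (_ : y ≠ 0) =>
      volume (symmDiff ((fun u => u - y) '' U) U) / ‖y‖₊) x hx0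
  rw [hsymm] at hle
  have hnx : (‖x‖₊ : ℝ≥0∞) ≠ 0 := by
    simpa using hx0
  have hnxt : (‖x‖₊ : ℝ≥0∞) ≠ ⊤ := ENNReal.coe_ne_top
  have hle2 : volume U + volume U ≤ Mstar * ‖x‖₊ :=
    (ENNReal.div_le_iff hnx hnxt).mp hle
  have hfin2 : Mstar * ‖x‖₊ ≠ ⊤ := ENNReal.mul_ne_top hMfin.ne hnxt
  have hreal : (volume U).toReal + (volume U).toReal ≤ Mstar.toReal * ‖x‖ := by
    have := ENNReal.toReal_mono hfin2 hle2
    rwa [ENNReal.toReal_add hfin.ne hfin.ne, ENNReal.toReal_mul,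
      ENNReal.coe_toReal, coe_nnnorm] at this
  have hxlt : ‖x‖ < (volume U).toReal / Mstar.toReal := by
    simpa [dist_eq_norm] using hx
  have hMt : 0 < Mstar.toReal := ENNReal.toReal_pos hMpos.ne' hMfin.ne
  have hUt : 0 < (volume U).toReal := ENNReal.toReal_pos h0.ne' hfin.ne
  have : Mstar.toReal * ‖x‖ < (volume U).toReal := by
    rw [lt_div_iff₀ hMt] at hxlt
    linarith [hxlt]
  linarith
end

section
/- Let K₀ ⊆ ℝ^d be nonempty compact and define K_n = (1/2)(K_{n-1} - K_{n-1}) for n ≥ 1. Then K₁ ⊆ K₂ ⊆ ⋯ ⊆ Conv(K₁), and Conv(K_n) = Conv(K₁) for all n ≥ 1. -/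
open scoped Pointwise ENNReal

theorem BS_process_monotone
    {d : ℕ} (K : ℕ → Set (EuclideanSpace ℝ (Fin d)))
    (hne : (K 0).Nonempty) (hcpt : IsCompact (K 0))
    (hK : ∀ n, K (n + 1) = (2⁻¹ : ℝ) • (K n - K n)) :
    (∀ n, 1 ≤ n → K n ⊆ K (n + 1)) ∧
      (∀ n, 1 ≤ n → K n ⊆ convexHull ℝ (K 1)) ∧
      (∀ n, 1 ≤ n → convexHull ℝ (K n) = convexHull ℝ (K 1)) := by
  -- symmetry of K (n+1)
  have hsymm : ∀ n x, x ∈ K (n + 1) → -x ∈ K (n + 1) := by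
    intro n x hx
    rw [hK n] at hx ⊢
    obtain ⟨y, hy, rfl⟩ := hx
    obtain ⟨a, ha, b, hb, rfl⟩ := Set.mem_sub.1 hy
    exact ⟨b - a, Set.sub_mem_sub hb ha, by rw [← smul_neg, neg_sub]⟩
  -- monotonicity
  have hmono : ∀ n, 1 ≤ n → K n ⊆ K (n + 1) := by
    intro n hn x hx
    obtain _ | m := n
    · omega
    have hnx : -x ∈ K (m + 1) := hsymm m x hx
    rw [hK]
    refine ⟨x - -x, Set.sub_mem_sub hx hnx, ?_⟩
    rw [sub_neg_eq_add]
    module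
  -- convex hull equality
  have hconv : ∀ n, 1 ≤ n → convexHull ℝ (K n) = convexHull ℝ (K 1) := by
    intro n hn
    induction n, hn using Nat.le_induction with
    | base => rfl
    | succ n hn ih =>
      rw [hK n, convexHull_smul, convexHull_sub, ih]
      -- show 2⁻¹ • (C - C) = C for C = convexHull ℝ (K 1)
      set C := convexHull ℝ (K 1) with hC
      have hCconv : Convex ℝ C := convex_convexHull ℝ _
      have hK1 : -K 1 = K 1 := by
        ext y
        rw [Set.mem_neg]
        constructor
        · intro hy
          simpa using hsymm 0 (-y) hy
        · intro hy
          exact hsymm 0 y hy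
      have hCneg : -C = C := by rw [hC, ← convexHull_neg, hK1]
      have hCsymm : ∀ x ∈ C, -x ∈ C := by
        intro x hx
        rw [← hCneg, Set.mem_neg, neg_neg]
        exact hx
      apply Set.Subset.antisymm
      · rintro _ ⟨y, hy, rfl⟩
        obtain ⟨a, ha, b, hb, rfl⟩ := Set.mem_sub.1 hy
        have hnb : -b ∈ C := hCsymm b hb
        have := hCconv ha hnb (by norm_num : (0:ℝ) ≤ 2⁻¹) (by norm_num : (0:ℝ) ≤ 2⁻¹) (by norm_num)
        simpa [smul_sub, sub_eq_add_neg, smul_neg] using this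
      · intro x hx
        have hnx : -x ∈ C := hCsymm x hx
        refine ⟨x - -x, Set.sub_mem_sub hx hnx, ?_⟩
        rw [sub_neg_eq_add]
        module
  exact ⟨hmono, fun n hn x hx => hconv n hn ▸ subset_convexHull ℝ _ hx, hconv⟩
end

section
/- Let K₀ ⊆ ℝ^d be nonempty compact and K_n = (1/2)(K_{n-1} - K_{n-1}). Then for every n ≥ 1, K_n equals the set of all sums Σᵢ (αᵢ/2^{n-1}) xᵢ where the αᵢ are nonnegative integers with Σᵢ αᵢ = 2^{n-1} and xᵢ ∈ K₁. -/
open scoped Pointwise ENNReal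

theorem expand_mult' {E : Type*} [AddCommMonoid E] [Module ℝ E] :
    ∀ (N : ℕ) (α : Fin N → ℕ) (x : Fin N → E),
    ∃ x' : Fin (∑ i, α i) → E, (∀ j, ∃ i, x' j = x i) ∧
      ∑ j, x' j = ∑ i, (α i : ℝ) • x i := by
  intro N
  induction N with
  | zero => intro α x; exact ⟨fun j => 0, fun j => j.elim0, by simp⟩
  | succ n ih =>
    intro α x
    obtain ⟨x'', h1, h2⟩ := ih (α ∘ Fin.succ) (x ∘ Fin.succ)
    have h : ∑ i, α i = α 0 + ∑ i, (α ∘ Fin.succ) i := Fin.sum_univ_succ α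
    refine ⟨fun j => Fin.append (fun _ : Fin (α 0) => x 0) x'' (Fin.cast h j), ?_, ?_⟩
    · have key : ∀ m, ∃ i, Fin.append (fun _ : Fin (α 0) => x 0) x'' m = x i := by
        intro m
        induction m using Fin.addCases with
        | left k => exact ⟨0, by simp⟩
        | right k =>
          obtain ⟨i, hi⟩ := h1 k
          exact ⟨i.succ, by simpa using hi⟩
      exact fun j => key (Fin.cast h j)
    · rw [Fintype.sum_equiv (finCongr h)
        (fun j => Fin.append (fun _ : Fin (α 0) => x 0) x'' (Fin.cast h j))
        (Fin.append (fun _ : Fin (α 0) => x 0) x'') (fun j => rfl)]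
      rw [Fin.sum_univ_add, Fin.sum_univ_succ (fun i => (α i : ℝ) • x i)]
      simp only [Fin.append_left, Fin.append_right]
      rw [h2, Finset.sum_const, Finset.card_univ, Fintype.card_fin]
      simp [Nat.cast_smul_eq_nsmul]

theorem canonical_form {E : Type*} [AddCommGroup E] [Module ℝ E]
    (K : ℕ → Set E) (hK : ∀ n, K (n + 1) = (2⁻¹ : ℝ) • (K n - K n)) :
    ∀ n, K (n + 1) = { y | ∃ x : Fin (2 ^ n) → E,
      (∀ i, x i ∈ K 1) ∧ y = ∑ i, ((2 : ℝ) ^ n)⁻¹ • x i } := by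
  have hsymm : ∀ z ∈ K 1, -z ∈ K 1 := by
    intro z hz
    rw [hK 0] at hz ⊢
    obtain ⟨w, hw, hwz⟩ := hz
    obtain ⟨a, ha, b, hb, hab⟩ := hw
    exact ⟨b - a, ⟨b, hb, a, ha, rfl⟩, by rw [← hwz, ← hab]; module⟩
  intro n
  induction n with
  | zero =>
    ext y
    constructor
    · intro hy
      exact ⟨fun _ => y, fun _ => hy, by simp⟩
    · rintro ⟨x, hx, rfl⟩
      simpa using hx 0
  | succ n ih =>
    have h2 : 2 ^ (n + 1) = 2 ^ n + 2 ^ n := by rw [pow_succ, mul_two]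
    have hc : ((2 : ℝ) ^ (n + 1))⁻¹ = 2⁻¹ * ((2 : ℝ) ^ n)⁻¹ := by
      rw [pow_succ, mul_inv, mul_comm]
    ext y
    rw [hK (n + 1)]
    constructor
    · rintro ⟨s, hs, rfl⟩
      obtain ⟨u, hu, v, hv, rfl⟩ := hs
      rw [ih] at hu hv
      obtain ⟨xu, hxu, rfl⟩ := hu
      obtain ⟨xv, hxv, rfl⟩ := hv
      set w : Fin (2 ^ n + 2 ^ n) → E := Fin.append xu (fun i => -xv i) with hw
      refine ⟨fun j => w (Fin.cast h2 j), ?_, ?_⟩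
      · intro j
        have key : ∀ m, w m ∈ K 1 := by
          refine Fin.addCases (fun k => ?_) (fun k => ?_)
          · simpa [hw] using hxu k
          · show w (Fin.natAdd (2 ^ n) k) ∈ K 1
            rw [hw, Fin.append_right]
            exact hsymm _ (hxv k)
        exact key _
      · rw [Fintype.sum_equiv (finCongr h2)
          (fun j => ((2 : ℝ) ^ (n + 1))⁻¹ • w (Fin.cast h2 j))
          (fun m => ((2 : ℝ) ^ (n + 1))⁻¹ • w m) (fun j => rfl)]
        rw [Fin.sum_univ_add]
        simp only [hw, Fin.append_left, Fin.append_right, hc, ← smul_smul]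
        simp only [smul_neg, Finset.sum_neg_distrib, ← Finset.smul_sum]
        rw [smul_sub, ← sub_eq_add_neg]
    · rintro ⟨x, hx, rfl⟩
      refine ⟨(∑ i : Fin (2 ^ n), ((2:ℝ) ^ n)⁻¹ • x (Fin.cast h2.symm (Fin.castAdd _ i)))
        - (∑ i : Fin (2 ^ n), ((2:ℝ) ^ n)⁻¹ • (- x (Fin.cast h2.symm (Fin.natAdd _ i)))), ?_, ?_⟩
      · refine ⟨_, ?_, _, ?_, rfl⟩
        · rw [ih]; exact ⟨_, fun i => hx _, rfl⟩
        · rw [ih]; exact ⟨_, fun i => hsymm _ (hx _), rfl⟩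
      · beta_reduce
        rw [← Fintype.sum_equiv (finCongr h2.symm)
          (fun m => ((2 : ℝ) ^ (n + 1))⁻¹ • x (Fin.cast h2.symm m))
          (fun j => ((2 : ℝ) ^ (n + 1))⁻¹ • x j) (fun m => rfl)]
        rw [Fin.sum_univ_add]
        simp only [hc, ← smul_smul, smul_neg, Finset.sum_neg_distrib, ← Finset.smul_sum]
        rw [smul_sub, smul_neg, sub_neg_eq_add]

theorem BS_process_description
    {d : ℕ} (K : ℕ → Set (EuclideanSpace ℝ (Fin d)))
    (hne : (K 0).Nonempty) (hcpt : IsCompact (K 0))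
    (hK : ∀ n, K (n + 1) = (2⁻¹ : ℝ) • (K n - K n)) :
    ∀ n, 1 ≤ n →
      K n = { y | ∃ (N : ℕ) (α : Fin N → ℕ) (x : Fin N → EuclideanSpace ℝ (Fin d)),
        (∑ i, α i = 2 ^ (n - 1)) ∧ (∀ i, x i ∈ K 1) ∧
        y = ∑ i, ((α i : ℝ) / 2 ^ (n - 1)) • x i } := by
  rintro n hn
  obtain ⟨m, rfl⟩ : ∃ m, n = m + 1 := ⟨n - 1, (Nat.succ_pred_eq_of_pos hn).symm⟩
  rw [canonical_form K hK m]
  ext y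
  simp only [Set.mem_setOf_eq, Nat.add_sub_cancel]
  constructor
  · rintro ⟨x, hx, rfl⟩
    refine ⟨2 ^ m, fun _ => 1, x, by simp, hx, ?_⟩
    exact Finset.sum_congr rfl fun i _ => by norm_num
  · rintro ⟨N, α, x, hsum, hx, rfl⟩
    obtain ⟨x', hx', hsum'⟩ := expand_mult' N α x
    refine ⟨fun i => x' (Fin.cast hsum.symm i), ?_, ?_⟩
    · intro i
      obtain ⟨j, hj⟩ := hx' (Fin.cast hsum.symm i)
      simp only [hj]; exact hx j
    · beta_reduce
      rw [Fintype.sum_equiv (finCongr hsum.symm)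
        (fun m' => ((2 : ℝ) ^ m)⁻¹ • x' (Fin.cast hsum.symm m'))
        (fun j => ((2 : ℝ) ^ m)⁻¹ • x' j) (fun m' => rfl)]
      rw [← Finset.smul_sum, hsum', Finset.smul_sum]
      exact Finset.sum_congr rfl fun i _ => by rw [smul_smul, div_eq_inv_mul]
end

section
/- Let K₀ ⊆ ℝ^d be nonempty compact with diameter D, and K_n = (1/2)(K_{n-1} - K_{n-1}). Then for all n ≥ log₂(d(d+1)), the Hausdorff distance between K_n and Conv(K₁) is at most Dd/2ⁿ. -/
open scoped Pointwise ENNReal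

private lemma round_mono' : Monotone (round : ℝ → ℤ) := fun a b h => by
  rw [round_eq, round_eq]; exact Int.floor_mono (by linarith)

section lists
variable {E : Type*} [AddCommGroup E] [Module ℝ E]

private lemma exists_list_mults (v : ℕ → E) (k : ℕ → ℕ) (c : ℕ) :
    ∃ l : List E, (∀ x ∈ l, ∃ i, i < c ∧ x = v i) ∧
      l.length = ∑ i ∈ Finset.range c, k i ∧
      l.sum = ∑ i ∈ Finset.range c, (k i : ℝ) • v i := by
  induction c with
  | zero => exact ⟨[], by simp, by simp, by simp⟩
  | succ c ih =>
    obtain ⟨l, hmem, hlen, hsum⟩ := ih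
    refine ⟨l ++ List.replicate (k c) (v c), ?_, ?_, ?_⟩
    · intro x hx
      rcases List.mem_append.1 hx with h | h
      · obtain ⟨i, hi, rfl⟩ := hmem x h; exact ⟨i, Nat.lt_succ_of_lt hi, rfl⟩
      · exact ⟨c, Nat.lt_succ_self c, (List.eq_of_mem_replicate h)⟩
    · simp [hlen, Finset.sum_range_succ]
    · rw [List.sum_append, List.sum_replicate, hsum, Finset.sum_range_succ,
        Nat.cast_smul_eq_nsmul]

private lemma avg_mem (K : ℕ → Set E)
    (hK : ∀ n, K (n + 1) = (2⁻¹ : ℝ) • (K n - K n))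
    (hsym : ∀ n x, x ∈ K (n+1) → -x ∈ K (n+1)) :
    ∀ j (l : List E), (∀ x ∈ l, x ∈ K 1) → l.length = 2^j →
      ((2:ℝ)^j)⁻¹ • l.sum ∈ K (j+1) := by
  intro j
  induction j with
  | zero =>
    intro l hl hlen
    obtain ⟨a, rfl⟩ := List.length_eq_one_iff.1 hlen
    simpa using hl a (by simp)
  | succ j ih =>
    intro l hl hlen
    set l₁ := l.take (2^j) with hl₁
    set l₂ := l.drop (2^j) with hl₂
    have h1 : l₁.length = 2^j := by
      rw [hl₁, List.length_take, hlen]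
      exact min_eq_left (Nat.pow_le_pow_right (by norm_num) (Nat.le_succ j))
    have h2 : l₂.length = 2^j := by
      rw [hl₂, List.length_drop, hlen, pow_succ]; omega
    have hu : ((2:ℝ)^j)⁻¹ • l₁.sum ∈ K (j+1) :=
      ih l₁ (fun x hx => hl x (List.take_subset _ _ hx)) h1
    have hv : ((2:ℝ)^j)⁻¹ • l₂.sum ∈ K (j+1) :=
      ih l₂ (fun x hx => hl x (List.drop_subset _ _ hx)) h2
    have key : ((2:ℝ)^(j+1))⁻¹ • l.sum =
        (2⁻¹ : ℝ) • (((2:ℝ)^j)⁻¹ • l₁.sum - -(((2:ℝ)^j)⁻¹ • l₂.sum)) := by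
      rw [sub_neg_eq_add, ← smul_add, ← List.sum_take_add_sum_drop l (2^j), smul_smul,
        pow_succ, mul_comm ((2:ℝ)^j) 2, mul_inv]
    rw [key, hK (j+1)]
    exact Set.smul_mem_smul_set (Set.sub_mem_sub hu (hsym j _ hv))
end lists


private lemma abel_bound {E : Type*} [SeminormedAddCommGroup E] [NormedSpace ℝ E]
    (c : ℕ) (Er : ℕ → ℝ) (v : ℕ → E) (δ B : ℝ)
    (hE : ∀ j, |Er j| ≤ δ) (hE0 : Er 0 = 0) (hEc : Er c = 0)
    (hB : 0 ≤ B) (hδ : 0 ≤ δ)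
    (hv : ∀ i j, i < c → j < c → ‖v i - v j‖ ≤ B) :
    ‖∑ i ∈ Finset.range c, (Er (i+1) - Er i) • v i‖ ≤ ((c - 1 : ℕ) : ℝ) * (δ * B) := by
  rcases Nat.eq_zero_or_pos c with rfl | hc
  · simp
  obtain ⟨c', rfl⟩ : ∃ c', c = c' + 1 := ⟨c - 1, by omega⟩
  have key : ∑ i ∈ Finset.range (c'+1), (Er (i+1) - Er i) • v i
      = ∑ i ∈ Finset.range c', Er (i+1) • (v i - v (i+1)) := by
    have h1 : ∑ i ∈ Finset.range (c'+1), (Er (i+1) - Er i) • v i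
        = ∑ i ∈ Finset.range (c'+1), Er (i+1) • v i
          - ∑ i ∈ Finset.range (c'+1), Er i • v i := by
      rw [← Finset.sum_sub_distrib]
      exact Finset.sum_congr rfl fun i _ => (sub_smul _ _ _)
    rw [h1, Finset.sum_range_succ, Finset.sum_range_succ' (fun i => Er i • v i), hEc, hE0]
    simp only [zero_smul, add_zero]
    rw [← Finset.sum_sub_distrib]
    exact Finset.sum_congr rfl fun i _ => (smul_sub _ _ _).symm
  rw [key]
  calc ‖∑ i ∈ Finset.range c', Er (i+1) • (v i - v (i+1))‖
      ≤ ∑ i ∈ Finset.range c', ‖Er (i+1) • (v i - v (i+1))‖ := norm_sum_le _ _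
    _ ≤ ∑ _i ∈ Finset.range c', δ * B := by
        refine Finset.sum_le_sum fun i hi => ?_
        rw [norm_smul, Real.norm_eq_abs]
        have hi' := Finset.mem_range.1 hi
        exact mul_le_mul (hE (i+1)) (hv i (i+1) (by omega) (by omega))
          (norm_nonneg _) hδ
    _ = ((c' + 1 - 1 : ℕ) : ℝ) * (δ * B) := by
        rw [Finset.sum_const, Finset.card_range]; simp

theorem BS_process_rate
    {d : ℕ} (K : ℕ → Set (EuclideanSpace ℝ (Fin d)))
    (hne : (K 0).Nonempty) (hcpt : IsCompact (K 0))
    (hK : ∀ n, K (n + 1) = (2⁻¹ : ℝ) • (K n - K n)) :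
    ∀ n : ℕ, Real.logb 2 (d * (d + 1)) ≤ n →
      Metric.hausdorffDist (K n) (convexHull ℝ (K 1)) ≤
        Metric.diam (K 0) * d / 2 ^ n := by
  intro n hn
  set D := Metric.diam (K 0) with hD
  have hD0 : 0 ≤ D := Metric.diam_nonneg
  -- nonemptiness of all K n
  have hKne : ∀ j, (K j).Nonempty := by
    intro j
    induction j with
    | zero => exact hne
    | succ j ih =>
      obtain ⟨x, hx⟩ := ih
      exact ⟨(2⁻¹ : ℝ) • (x - x), by
        rw [hK]; exact Set.smul_mem_smul_set (Set.sub_mem_sub hx hx)⟩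
  -- symmetry
  have hsym : ∀ j x, x ∈ K (j+1) → -x ∈ K (j+1) := by
    intro j x hx
    rw [hK] at hx ⊢
    obtain ⟨y, hy, rfl⟩ := hx
    rw [Set.mem_sub] at hy
    obtain ⟨a, ha, b, hb, rfl⟩ := hy
    exact ⟨b - a, Set.sub_mem_sub hb ha, by rw [← smul_neg, neg_sub]⟩
  -- trivial dimension zero case
  rcases Nat.eq_zero_or_pos d with hd | hd
  · subst hd
    have hsub : Subsingleton (EuclideanSpace ℝ (Fin 0)) :=
      ⟨fun a b => by ext i; exact Fin.elim0 i⟩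
    have heq : K n = convexHull ℝ (K 1) := by
      obtain ⟨b, hb⟩ := hKne 1
      have hb' : b ∈ convexHull ℝ (K 1) := subset_convexHull ℝ _ hb
      obtain ⟨a, ha⟩ := hKne n
      ext x
      constructor
      · intro _; rwa [Subsingleton.elim x b]
      · intro _; rwa [Subsingleton.elim x a]
    rw [heq, Metric.hausdorffDist_self_zero]
    positivity
  -- main case : d ≥ 1, n ≥ 1
  have hn1 : 1 ≤ n := by
    by_contra h
    push_neg at h
    interval_cases n
    have h2 : (2:ℝ) ≤ ((d * (d + 1) : ℕ) : ℝ) := by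
      have : 2 ≤ d * (d + 1) := by nlinarith
      exact_mod_cast this
    have h1 : (1:ℝ) ≤ Real.logb 2 (((d * (d + 1) : ℕ) : ℝ)) := by
      rw [show (1:ℝ) = Real.logb 2 2 from (Real.logb_self_eq_one (by norm_num)).symm]
      exact Real.logb_le_logb_of_le (by norm_num) (by norm_num) h2
    push_cast at hn h1
    linarith
  obtain ⟨nm, rfl⟩ : ∃ nm, n = nm + 1 := ⟨n - 1, by omega⟩
  set n := nm + 1 with hndef
  -- norm bound on K 1
  have hbd : ∀ x ∈ K 1, ‖x‖ ≤ D / 2 := by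
    intro x hx
    rw [hK 0] at hx
    obtain ⟨y, hy, rfl⟩ := hx
    rw [Set.mem_sub] at hy
    obtain ⟨a, ha, b, hb, rfl⟩ := hy
    rw [norm_smul]
    have : ‖a - b‖ ≤ D := by
      rw [← dist_eq_norm]
      exact Metric.dist_le_diam_of_mem hcpt.isBounded ha hb
    simp only [norm_inv, Real.norm_ofNat]
    linarith
  -- conv (K 1) is symmetric
  have hconvsym : ∀ x ∈ convexHull ℝ (K 1), -x ∈ convexHull ℝ (K 1) := by
    intro x hx
    have hKs : K 1 = -K 1 := by
      ext y
      rw [Set.mem_neg]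
      constructor
      · intro hy; exact hsym 0 y hy
      · intro hy; simpa using hsym 0 _ hy
    rw [← Set.mem_neg, ← convexHull_neg, ← hKs]
    exact hx
  -- K (j+1) ⊆ convexHull (K 1)
  have hsubconv : ∀ j, K (j+1) ⊆ convexHull ℝ (K 1) := by
    intro j
    induction j with
    | zero => exact subset_convexHull ℝ _
    | succ j ih =>
      intro x hx
      rw [hK (j+1)] at hx
      obtain ⟨y, hy, rfl⟩ := hx
      rw [Set.mem_sub] at hy
      obtain ⟨a, ha, b, hb, rfl⟩ := hy
      have h1 : a ∈ convexHull ℝ (K 1) := ih ha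
      have h2 : -b ∈ convexHull ℝ (K 1) := hconvsym b (ih hb)
      show (2⁻¹:ℝ) • (a - b) ∈ _
      have heq : (2⁻¹:ℝ) • (a - b) = (2⁻¹:ℝ) • a + (2⁻¹:ℝ) • (-b) := by module
      rw [heq]
      exact (convex_convexHull ℝ (K 1)) h1 h2 (by norm_num) (by norm_num) (by norm_num)
  -- the approximation step
  have happrox : ∀ x ∈ convexHull ℝ (K 1), ∃ y ∈ K n, dist x y ≤ D * d / 2 ^ n := by
    intro x hx
    classical
    obtain ⟨ι, fι, z, w, hzran, haff, hwpos, hwsum, hxsum⟩ :=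
      eq_pos_convex_span_of_mem_convexHull hx
    have hcd : Fintype.card ι ≤ d + 1 := by
      have h1 := haff.card_le_finrank_succ
      have h2 : Module.finrank ℝ (vectorSpan ℝ (Set.range z)) ≤
          Module.finrank ℝ (EuclideanSpace ℝ (Fin d)) :=
        Submodule.finrank_le _
      rw [finrank_euclideanSpace_fin] at h2
      omega
    obtain ⟨c, hc⟩ : ∃ c, Fintype.card ι = c := ⟨_, rfl⟩
    have e : Fin c ≃ ι := hc ▸ (Fintype.equivFin ι).symm
    set lam : ℕ → ℝ := fun i => if h : i < c then w (e ⟨i, h⟩) else 0 with hlamdef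
    set v : ℕ → EuclideanSpace ℝ (Fin d) :=
      fun i => if h : i < c then z (e ⟨i, h⟩) else 0 with hvdef
    have hlam_fin : ∀ i : Fin c, lam i = w (e i) := by
      intro i; rw [hlamdef]; dsimp only; rw [dif_pos i.isLt]
    have hv_fin : ∀ i : Fin c, v i = z (e i) := by
      intro i; rw [hvdef]; dsimp only; rw [dif_pos i.isLt]
    have hlam0 : ∀ i, 0 ≤ lam i := by
      intro i; rw [hlamdef]; dsimp only
      split
      · exact (hwpos _).le
      · exact le_refl 0
    have hvmem : ∀ i, i < c → v i ∈ K 1 := by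
      intro i hi; rw [hvdef]; dsimp only; rw [dif_pos hi]
      exact hzran ⟨_, rfl⟩
    have hsum1 : ∑ i ∈ Finset.range c, lam i = 1 := by
      rw [← Fin.sum_univ_eq_sum_range]
      rw [Finset.sum_congr rfl (fun i _ => hlam_fin i), Equiv.sum_comp e w, hwsum]
    have hxeq : x = ∑ i ∈ Finset.range c, lam i • v i := by
      rw [← Fin.sum_univ_eq_sum_range (fun i => lam i • v i)]
      rw [Finset.sum_congr rfl (fun (i : Fin c) _ => by rw [hlam_fin i, hv_fin i])]
      rw [Equiv.sum_comp e (fun j => w j • z j), hxsum]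
    -- the rounding
    set m : ℕ := 2 ^ nm with hmdef
    have hM : ((m : ℕ) : ℝ) = 2 ^ nm := by rw [hmdef]; push_cast; ring
    have hm0 : (0:ℝ) < (m:ℝ) := by rw [hM]; positivity
    set Λ : ℕ → ℝ := fun j => ∑ i ∈ Finset.range j, lam i with hΛdef
    set N : ℕ → ℤ := fun j => round ((m:ℝ) * Λ j) with hNdef
    have hΛmono : Monotone Λ := fun a b hab =>
      Finset.sum_le_sum_of_subset_of_nonneg (Finset.range_subset_range.2 hab)
        (fun i _ _ => hlam0 i)
    have hNmono : Monotone N := fun a b hab =>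
      round_mono' (mul_le_mul_of_nonneg_left (hΛmono hab) hm0.le)
    set k : ℕ → ℕ := fun i => (N (i+1) - N i).toNat with hkdef
    have hkcast : ∀ i, ((k i : ℕ) : ℤ) = N (i+1) - N i := fun i =>
      Int.toNat_of_nonneg (sub_nonneg.2 (hNmono (Nat.le_succ i)))
    have hΛ0 : Λ 0 = 0 := by simp [hΛdef]
    have hΛc : Λ c = 1 := hsum1
    have hN0 : N 0 = 0 := by rw [hNdef]; dsimp only; rw [hΛ0, mul_zero, round_zero]
    have hNc : N c = m := by
      rw [hNdef]; dsimp only; rw [hΛc, mul_one, round_natCast]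
    have hksum : ∑ i ∈ Finset.range c, k i = m := by
      have h1 : ((∑ i ∈ Finset.range c, k i : ℕ) : ℤ) = (m : ℤ) := by
        rw [Nat.cast_sum, Finset.sum_congr rfl (fun i _ => hkcast i),
          Finset.sum_range_sub (fun i => N i), hN0, hNc, sub_zero]
      exact_mod_cast h1
    -- the error terms
    set Er : ℕ → ℝ := fun j => Λ j - (N j : ℝ) / m with hErdef
    have hEabs : ∀ j, |Er j| ≤ 1 / (2 * m) := by
      intro j
      have h1 : Er j = ((m:ℝ) * Λ j - (N j : ℝ)) / m := by
        rw [hErdef]; dsimp only; field_simp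
      have h2 : |(m:ℝ) * Λ j - (N j : ℝ)| ≤ 1/2 := by
        rw [hNdef]; exact abs_sub_round _
      rw [h1, abs_div, abs_of_pos hm0]
      calc |(m:ℝ) * Λ j - (N j : ℝ)| / m ≤ (1/2) / m := by gcongr
        _ = 1 / (2 * m) := by ring
    have hE0 : Er 0 = 0 := by rw [hErdef]; dsimp only; rw [hΛ0, hN0]; simp
    have hEc : Er c = 0 := by
      rw [hErdef]; dsimp only; rw [hΛc, hNc]
      field_simp
      simp
    -- the approximating point y
    obtain ⟨l, hlmem, hllen, hlsum⟩ := exists_list_mults v k c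
    have hlK : ∀ p ∈ l, p ∈ K 1 := by
      intro p hp
      obtain ⟨i, hi, rfl⟩ := hlmem p hp
      exact hvmem i hi
    have hy : ((2:ℝ)^nm)⁻¹ • l.sum ∈ K n :=
      avg_mem K hK hsym nm l hlK (by rw [hllen, hksum])
    refine ⟨((2:ℝ)^nm)⁻¹ • l.sum, hy, ?_⟩
    have hyeq : ((2:ℝ)^nm)⁻¹ • l.sum
        = ∑ i ∈ Finset.range c, ((k i : ℝ) / m) • v i := by
      rw [hlsum, Finset.smul_sum]
      refine Finset.sum_congr rfl fun i _ => ?_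
      rw [smul_smul, div_eq_mul_inv, mul_comm, hM]
    have hdiff : x - ((2:ℝ)^nm)⁻¹ • l.sum
        = ∑ i ∈ Finset.range c, (Er (i+1) - Er i) • v i := by
      rw [hxeq, hyeq, ← Finset.sum_sub_distrib]
      refine Finset.sum_congr rfl fun i _ => ?_
      rw [← sub_smul]
      congr 1
      have h1 : Λ (i+1) - Λ i = lam i := by
        rw [hΛdef]; dsimp only; rw [Finset.sum_range_succ]; ring
      have h2 : ((k i : ℕ) : ℝ) = ((N (i+1) : ℝ) - (N i : ℝ)) := by
        exact_mod_cast hkcast i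
      rw [hErdef]; dsimp only
      rw [h2, ← h1]
      field_simp
      ring
    -- distance bound
    have hvv : ∀ i j, i < c → j < c → ‖v i - v j‖ ≤ D := by
      intro i j hi hj
      calc ‖v i - v j‖ ≤ ‖v i‖ + ‖v j‖ := norm_sub_le _ _
        _ ≤ D/2 + D/2 := add_le_add (hbd _ (hvmem i hi)) (hbd _ (hvmem j hj))
        _ = D := by ring
    have hnormbd : ‖x - ((2:ℝ)^nm)⁻¹ • l.sum‖ ≤ ((c - 1 : ℕ) : ℝ) * (1/(2*m) * D) := by
      rw [hdiff]
      exact abel_bound c Er v (1/(2*m)) D hEabs hE0 hEc hD0 (by positivity) hvv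
    rw [dist_eq_norm]
    refine hnormbd.trans ?_
    have hcd' : ((c - 1 : ℕ) : ℝ) ≤ (d : ℝ) := by
      have : c - 1 ≤ d := by omega
      exact_mod_cast this
    calc ((c - 1 : ℕ) : ℝ) * (1/(2*m) * D) ≤ (d : ℝ) * (1/(2*m) * D) := by
          have : (0:ℝ) ≤ 1/(2*m) * D := by positivity
          exact mul_le_mul_of_nonneg_right hcd' this
      _ = D * d / 2 ^ n := by
          rw [hndef, hM, pow_succ]
          ring
  refine Metric.hausdorffDist_le_of_mem_dist (by positivity) ?_ ?_
  · intro x hx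
    refine ⟨x, hsubconv nm hx, ?_⟩
    rw [dist_self]; positivity
  · exact happrox
end

section
/- Let K₀ ⊆ ℝ^d be nonempty compact and K_n = (1/2)(K_{n-1} - K_{n-1}). Then K_n converges to Conv(K₁) in the Hausdorff metric as n → ∞. -/
open scoped Pointwise ENNReal

open Filter

lemma aux_convex_of_midpoint {E : Type*} [NormedAddCommGroup E] [NormedSpace ℝ E]
    {s : Set E} (hs : IsClosed s) (hmid : ∀ x ∈ s, ∀ y ∈ s, (2⁻¹ : ℝ) • (x + y) ∈ s) :
    Convex ℝ s := by
  rw [convex_iff_segment_subset]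
  intro x hx y hy z hz
  rw [segment_eq_image'] at hz
  obtain ⟨t, ht, rfl⟩ := hz
  have key : ∀ n : ℕ, ∀ k : ℕ, k ≤ 2 ^ n → x + ((k : ℝ) / 2 ^ n) • (y - x) ∈ s := by
    intro n
    induction n with
    | zero =>
      intro k hk
      interval_cases k
      · simpa using hx
      · simpa using hy
    | succ n ih =>
      intro k hk
      have h2 : (2:ℕ) ^ (n+1) = 2 ^ n * 2 := pow_succ 2 n
      have h1 : k / 2 ≤ 2 ^ n := by omega
      have h2' : k - k / 2 ≤ 2 ^ n := by omega
      have hm := hmid _ (ih (k / 2) h1) _ (ih (k - k / 2) h2')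
      have hsum : ((k / 2 : ℕ) : ℝ) + ((k - k / 2 : ℕ) : ℝ) = (k : ℝ) := by
        have h : k / 2 + (k - k / 2) = k := by omega
        exact_mod_cast congrArg (fun m : ℕ => (m : ℝ)) h
      have heq : (2⁻¹ : ℝ) • ((x + (((k / 2 : ℕ) : ℝ) / 2 ^ n) • (y - x)) +
          (x + (((k - k / 2 : ℕ) : ℝ) / 2 ^ n) • (y - x))) =
          x + ((k : ℝ) / 2 ^ (n+1)) • (y - x) := by
        rw [← hsum]
        match_scalars <;> ring
      rwa [heq] at hm
  have hle : ∀ n : ℕ, ((⌊t * 2 ^ n⌋₊ : ℝ) / 2 ^ n) ≤ t := by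
    intro n
    rw [div_le_iff₀ (by positivity)]
    exact Nat.floor_le (mul_nonneg ht.1 (by positivity))
  have hge : ∀ n : ℕ, t - (2 ^ n)⁻¹ ≤ ((⌊t * 2 ^ n⌋₊ : ℝ) / 2 ^ n) := by
    intro n
    have hp : (0:ℝ) < 2 ^ n := by positivity
    have h := (Nat.lt_floor_add_one (t * 2 ^ n)).le
    have h2 : t ≤ ((⌊t * 2 ^ n⌋₊ : ℝ) + 1) / 2 ^ n := by
      rw [le_div_iff₀ hp]; linarith
    have e : ((⌊t * 2 ^ n⌋₊ : ℝ) + 1) / 2 ^ n = (⌊t * 2 ^ n⌋₊ : ℝ) / 2 ^ n + (2 ^ n)⁻¹ := by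
      ring
    rw [e] at h2; linarith
  have h0 : Tendsto (fun n : ℕ => ((2:ℝ) ^ n)⁻¹) atTop (nhds 0) := by
    simpa [inv_pow] using
      tendsto_pow_atTop_nhds_zero_of_lt_one (by norm_num : (0:ℝ) ≤ 2⁻¹) (by norm_num)
  have h1 : Tendsto (fun n : ℕ => t - ((2:ℝ) ^ n)⁻¹) atTop (nhds t) := by
    simpa using tendsto_const_nhds.sub h0
  have hnet : Tendsto (fun n : ℕ => ((⌊t * 2 ^ n⌋₊ : ℝ) / 2 ^ n)) atTop (nhds t) :=
    tendsto_of_tendsto_of_tendsto_of_le_of_le h1 tendsto_const_nhds hge hle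
  have hpt : Tendsto (fun n : ℕ => x + ((⌊t * 2 ^ n⌋₊ : ℝ) / 2 ^ n) • (y - x)) atTop
      (nhds (x + t • (y - x))) :=
    tendsto_const_nhds.add (hnet.smul_const (y - x))
  refine hs.mem_of_tendsto hpt (Filter.Eventually.of_forall fun n => ?_)
  refine key n _ ?_
  have hb : t * 2 ^ n ≤ (2:ℝ) ^ n := by
    nlinarith [ht.2, (by positivity : (0:ℝ) < 2 ^ n)]
  calc ⌊t * 2 ^ n⌋₊ ≤ ⌊((2:ℝ) ^ n)⌋₊ := Nat.floor_le_floor hb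
    _ = 2 ^ n := by
        rw [show ((2:ℝ) ^ n) = ((2 ^ n : ℕ) : ℝ) by push_cast; ring, Nat.floor_natCast]

theorem BS_process_converges
    {d : ℕ} (K : ℕ → Set (EuclideanSpace ℝ (Fin d)))
    (hne : (K 0).Nonempty) (hcpt : IsCompact (K 0))
    (hK : ∀ n, K (n + 1) = (2⁻¹ : ℝ) • (K n - K n)) :
    Tendsto (fun n => Metric.hausdorffDist (K n) (convexHull ℝ (K 1))) atTop
      (nhds 0) := by
  -- symmetry of K (n+1)
  have hsymm : ∀ n : ℕ, ∀ x ∈ K (n + 1), -x ∈ K (n + 1) := by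
    intro n x hx
    rw [hK n] at hx ⊢
    obtain ⟨y, hy, rfl⟩ := hx
    obtain ⟨a, ha, b, hb, rfl⟩ := hy
    refine ⟨b - a, Set.sub_mem_sub hb ha, ?_⟩
    rw [← smul_neg, neg_sub]
  -- midpoint property
  have hmid : ∀ n : ℕ, ∀ x ∈ K (n + 1), ∀ y ∈ K (n + 1),
      (2⁻¹ : ℝ) • (x + y) ∈ K (n + 2) := by
    intro n x hx y hy
    rw [hK (n + 1)]
    exact ⟨x - -y, Set.sub_mem_sub hx (hsymm n y hy), by rw [sub_neg_eq_add]⟩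
  -- monotonicity
  have hmono : ∀ n : ℕ, K (n + 1) ⊆ K (n + 2) := by
    intro n x hx
    have := hmid n x hx x hx
    rwa [show (2⁻¹ : ℝ) • (x + x) = x by match_scalars; ring] at this
  have hmono' : ∀ m n : ℕ, m ≤ n → K (m + 1) ⊆ K (n + 1) := by
    intro m n hmn
    induction n with
    | zero => simp_all
    | succ n ih =>
      rcases Nat.eq_or_lt_of_le hmn with rfl | h
      · exact subset_rfl
      · exact (ih (Nat.lt_succ_iff.mp h)).trans (hmono n)
  -- union and its closure
  set U : Set (EuclideanSpace ℝ (Fin d)) := ⋃ n, K (n + 1) with hU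
  have hUmid : ∀ x ∈ U, ∀ y ∈ U, (2⁻¹ : ℝ) • (x + y) ∈ U := by
    intro x hx y hy
    obtain ⟨_, ⟨m, rfl⟩, hxm⟩ := hx
    obtain ⟨_, ⟨n, rfl⟩, hyn⟩ := hy
    have hx' : x ∈ K (max m n + 1) := hmono' m _ (le_max_left m n) hxm
    have hy' : y ∈ K (max m n + 1) := hmono' n _ (le_max_right m n) hyn
    exact Set.mem_iUnion.2 ⟨max m n + 1, hmid _ x hx' y hy'⟩
  have hCmid : ∀ x ∈ closure U, ∀ y ∈ closure U,
      (2⁻¹ : ℝ) • (x + y) ∈ closure U := by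
    intro x hx y hy
    have hcont : Continuous (fun p : (EuclideanSpace ℝ (Fin d)) × (EuclideanSpace ℝ (Fin d)) =>
        (2⁻¹ : ℝ) • (p.1 + p.2)) := by fun_prop
    have hmem : (x, y) ∈ closure (U ×ˢ U) := by
      rw [closure_prod_eq]; exact ⟨hx, hy⟩
    have := image_closure_subset_closure_image (s := U ×ˢ U) hcont ⟨(x, y), hmem, rfl⟩
    refine closure_mono ?_ this
    rintro _ ⟨⟨a, b⟩, ⟨ha, hb⟩, rfl⟩
    exact hUmid a ha b hb
  have hCconv : Convex ℝ (closure U) := aux_convex_of_midpoint isClosed_closure hCmid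
  have hK1C : K 1 ⊆ closure U := (Set.subset_iUnion (fun n => K (n + 1)) 0).trans subset_closure
  have hhullC : convexHull ℝ (K 1) ⊆ closure U := convexHull_min hK1C hCconv
  -- each K (n+1) is inside the hull
  have hinhull : ∀ n : ℕ, K (n + 1) ⊆ convexHull ℝ (K 1) := by
    intro n
    induction n with
    | zero => exact subset_convexHull ℝ _
    | succ n ih =>
      rw [hK (n + 1)]
      rintro _ ⟨_, ⟨a, ha, b, hb, rfl⟩, rfl⟩
      have hhullsymm : -b ∈ convexHull ℝ (K 1) := by
        have : -b ∈ -convexHull ℝ (K 1) := Set.neg_mem_neg.2 (ih hb)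
        rw [← convexHull_neg] at this
        have hKs : -(K 1) = K 1 := by
          ext z
          rw [Set.mem_neg]
          constructor
          · intro hz; simpa using hsymm 0 (-z) hz
          · intro hz; exact hsymm 0 z hz
        rwa [hKs] at this
      have h2 : (2⁻¹ : ℝ) • (a - b) = (2⁻¹ : ℝ) • a + (2⁻¹ : ℝ) • (-b) := by
        match_scalars <;> ring
      show (2⁻¹ : ℝ) • (a - b) ∈ convexHull ℝ (K 1)
      rw [h2]
      exact (convex_convexHull ℝ (K 1)) (ih ha) hhullsymm (by norm_num) (by norm_num) (by norm_num)
  -- compactness facts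
  have hK1cpt : IsCompact (K 1) := by
    have himg : K 1 = (fun p : (EuclideanSpace ℝ (Fin d)) × (EuclideanSpace ℝ (Fin d)) =>
        (2⁻¹ : ℝ) • (p.1 - p.2)) '' (K 0 ×ˢ K 0) := by
      rw [hK 0]
      ext z
      constructor
      · rintro ⟨_, ⟨a, ha, b, hb, rfl⟩, rfl⟩
        exact ⟨(a, b), ⟨ha, hb⟩, rfl⟩
      · rintro ⟨⟨a, b⟩, ⟨ha, hb⟩, rfl⟩
        exact ⟨a - b, Set.sub_mem_sub ha hb, rfl⟩
    rw [himg]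
    exact (hcpt.prod hcpt).image (by fun_prop)
  set L := closure (convexHull ℝ (K 1)) with hL
  have hLcpt : IsCompact L :=
    Metric.isCompact_of_isClosed_isBounded isClosed_closure
      (isBounded_convexHull.2 hK1cpt.isBounded).closure
  have hLsub : L ⊆ closure U := by
    rw [hL, ← closure_closure (s := U)]
    exact closure_mono hhullC
  -- the convergence
  rw [Metric.tendsto_atTop]
  intro ε hε
  -- cover L by finitely many ε/4-balls centered in L
  have hcov : L ⊆ ⋃ i : L, Metric.ball (i : EuclideanSpace ℝ (Fin d)) (ε / 4) := by
    intro x hx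
    exact Set.mem_iUnion.2 ⟨⟨x, hx⟩, Metric.mem_ball_self (by linarith)⟩
  obtain ⟨t, ht⟩ := hLcpt.elim_finite_subcover
    (fun i : L => Metric.ball (i : EuclideanSpace ℝ (Fin d)) (ε / 4))
    (fun i => Metric.isOpen_ball) hcov
  have hchoice : ∀ i : L, i ∈ t → ∃ m : ℕ, ∃ u ∈ K (m + 1),
      dist (i : EuclideanSpace ℝ (Fin d)) u < ε / 4 := by
    intro i _
    have hiU : (i : EuclideanSpace ℝ (Fin d)) ∈ closure U := hLsub i.2
    obtain ⟨u, huU, hud⟩ := Metric.mem_closure_iff.1 hiU (ε / 4) (by linarith)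
    obtain ⟨_, ⟨m, rfl⟩, hum⟩ := huU
    exact ⟨m, u, hum, hud⟩
  choose m u hu hdist using hchoice
  set N := t.attach.sup fun i => m i.1 i.2 with hN
  refine ⟨N + 1, fun n hn => ?_⟩
  obtain ⟨p, rfl⟩ : ∃ p, n = p + 1 := ⟨n - 1, by omega⟩
  have hpN : N ≤ p := by omega
  have hnonneg := Metric.hausdorffDist_nonneg (s := K (p + 1)) (t := convexHull ℝ (K 1))
  rw [Real.dist_eq, sub_zero, abs_of_nonneg hnonneg]
  have hbound : Metric.hausdorffDist (K (p + 1)) (convexHull ℝ (K 1)) ≤ ε / 2 := by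
    apply Metric.hausdorffDist_le_of_mem_dist (by linarith)
    · intro x hx
      exact ⟨x, hinhull p hx, by rw [dist_self]; linarith⟩
    · intro x hx
      have hxL : x ∈ L := subset_closure hx
      obtain ⟨i, hit, hxi⟩ := Set.mem_iUnion₂.1 (ht hxL)
      refine ⟨u i hit, ?_, ?_⟩
      · have hmle : m i hit ≤ p := le_trans (Finset.le_sup (f := fun j : {j // j ∈ t} => m j.1 j.2)
          (Finset.mem_attach t ⟨i, hit⟩)) hpN
        exact hmono' _ _ hmle (hu i hit)
      · calc dist x (u i hit) ≤ dist x (i : EuclideanSpace ℝ (Fin d)) +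
              dist (i : EuclideanSpace ℝ (Fin d)) (u i hit) := dist_triangle _ _ _
          _ ≤ ε / 4 + ε / 4 := add_le_add (le_of_lt (Metric.mem_ball.1 hxi)) (hdist i hit).le
          _ = ε / 2 := by ring
  linarith
end

section
/- A nonempty compact set A ⊆ ℝ^d satisfies (1/2)(A - A) = A if and only if A is convex, A = -A, and 0 ∈ A. -/
open scoped Pointwise ENNReal

lemma closed_midpoint_convex {E : Type*} [NormedAddCommGroup E] [NormedSpace ℝ E]
    {A : Set E} (hcl : IsClosed A)
    (hmid : ∀ x ∈ A, ∀ y ∈ A, (2⁻¹ : ℝ) • (x + y) ∈ A) : Convex ℝ A := by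
  intro x hx y hy a b ha hb hab
  have key : ∀ n : ℕ, ∀ k : ℕ, k ≤ 2 ^ n →
      ((k : ℝ) / 2 ^ n) • x + (1 - (k : ℝ) / 2 ^ n) • y ∈ A := by
    intro n
    induction n with
    | zero =>
      intro k hk
      interval_cases k <;> simp [hx, hy]
    | succ n ih =>
      intro k hk
      have h2n : 2 ^ (n+1) = 2 * 2 ^ n := by ring
      rcases Nat.even_or_odd k with ⟨m, hm⟩ | ⟨m, hm⟩
      · subst hm
        have h1 : m ≤ 2 ^ n := by omega
        have := ih m h1
        have heq : ((m + m : ℕ) : ℝ) / 2 ^ (n+1) = (m : ℝ) / 2 ^ n := by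
          push_cast; field_simp; ring
        rwa [heq]
      · subst hm
        have h1 : m ≤ 2 ^ n := by omega
        have h2 : m + 1 ≤ 2 ^ n := by omega
        have := hmid _ (ih m h1) _ (ih (m+1) h2)
        have heq : (2⁻¹ : ℝ) •
            ((((m : ℝ) / 2 ^ n) • x + (1 - (m : ℝ) / 2 ^ n) • y) +
             ((((m:ℝ)+1) / 2 ^ n) • x + (1 - ((m:ℝ)+1) / 2 ^ n) • y)) =
            (((2*m+1 : ℕ) : ℝ) / 2 ^ (n+1)) • x + (1 - ((2*m+1 : ℕ) : ℝ) / 2 ^ (n+1)) • y := by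
          push_cast
          match_scalars <;> field_simp <;> ring
        push_cast at this heq ⊢
        rw [heq] at this
        exact this
  -- approximate a by dyadics
  have hb' : b = 1 - a := by linarith
  subst hb'
  have ha1 : a ≤ 1 := by linarith
  set f : ℕ → ℝ := fun n => (⌊a * 2 ^ n⌋₊ : ℝ) / 2 ^ n with hf
  have hmem : ∀ n, (f n) • x + (1 - f n) • y ∈ A := by
    intro n
    apply key
    have : a * 2 ^ n ≤ 2 ^ n := by
      have : (0:ℝ) < 2 ^ n := by positivity
      nlinarith
    calc ⌊a * 2 ^ n⌋₊ ≤ ⌊(2:ℝ) ^ n⌋₊ := Nat.floor_le_floor this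
      _ = 2 ^ n := by
          rw [show ((2:ℝ)^n) = ((2^n : ℕ) : ℝ) by push_cast; ring, Nat.floor_natCast]
  have htend : Filter.Tendsto f Filter.atTop (nhds a) := by
    have hlow : ∀ n, a - (2⁻¹ : ℝ) ^ n ≤ f n := by
      intro n
      have hpos : (0:ℝ) < 2 ^ n := by positivity
      have := Nat.lt_floor_add_one (a * 2 ^ n)
      rw [hf]
      simp only
      rw [le_div_iff₀ hpos]
      have hinv : ((2:ℝ)⁻¹)^n * 2^n = 1 := by
        rw [← mul_pow]; norm_num
      nlinarith [Nat.lt_floor_add_one (a * 2 ^ n)]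
    have hup : ∀ n, f n ≤ a := by
      intro n
      have hpos : (0:ℝ) < 2 ^ n := by positivity
      rw [hf]
      simp only
      rw [div_le_iff₀ hpos]
      exact Nat.floor_le (by positivity)
    have h1 : Filter.Tendsto (fun n : ℕ => a - (2⁻¹ : ℝ) ^ n) Filter.atTop (nhds a) := by
      have := tendsto_pow_atTop_nhds_zero_of_lt_one (by norm_num : (0:ℝ) ≤ 2⁻¹) (by norm_num)
      simpa using (tendsto_const_nhds.sub this)
    exact tendsto_of_tendsto_of_tendsto_of_le_of_le h1 tendsto_const_nhds hlow hup
  have hcont : Filter.Tendsto (fun n => (f n) • x + (1 - f n) • y) Filter.atTop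
      (nhds (a • x + (1 - a) • y)) := by
    exact ((htend.smul_const x).add ((tendsto_const_nhds.sub htend).smul_const y))
  exact hcl.mem_of_tendsto hcont (Filter.Eventually.of_forall hmem)

theorem steinhaus_fixed_points
    {d : ℕ} (A : Set (EuclideanSpace ℝ (Fin d))) (hne : A.Nonempty)
    (hA : IsCompact A) :
    (2⁻¹ : ℝ) • (A - A) = A ↔
      Convex ℝ A ∧ A = -A ∧ (0 : EuclideanSpace ℝ (Fin d)) ∈ A := by
  constructor
  · intro h
    have hsym : ∀ x ∈ A, -x ∈ A := by
      intro x hx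
      rw [← h] at hx
      obtain ⟨z, hz, hzx⟩ := hx
      obtain ⟨a, ha, b, hb, rfl⟩ := Set.mem_sub.mp hz
      rw [← h]
      refine ⟨b - a, Set.sub_mem_sub hb ha, ?_⟩
      rw [← hzx]; rw [← smul_neg]; ring_nf; rw [neg_sub]
    refine ⟨?_, ?_, ?_⟩
    · apply closed_midpoint_convex hA.isClosed
      intro x hx y hy
      rw [← h]
      exact ⟨x - (-y), Set.sub_mem_sub hx (hsym y hy), by rw [sub_neg_eq_add]⟩
    · ext x
      constructor
      · intro hx; simpa using hsym x hx
      · intro hx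
        have := hsym (-x) (Set.mem_neg.mp hx)
        simpa using this
    · obtain ⟨a, ha⟩ := hne
      rw [← h]
      exact ⟨a - a, Set.sub_mem_sub ha ha, by simp⟩
  · rintro ⟨hconv, hsym, h0⟩
    have hs : ∀ x ∈ A, -x ∈ A := by
      intro x hx
      rw [hsym]; simpa using hx
    apply Set.Subset.antisymm
    · rintro z ⟨w, hw, rfl⟩
      obtain ⟨a, ha, b, hb, rfl⟩ := Set.mem_sub.mp hw
      have : (2⁻¹ : ℝ) • (a - b) = (2⁻¹ : ℝ) • a + (2⁻¹ : ℝ) • (-b) := by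
        rw [← smul_add, sub_eq_add_neg]
      show (2⁻¹ : ℝ) • (a - b) ∈ A
      rw [this]
      exact hconv ha (hs b hb) (by norm_num) (by norm_num) (by norm_num)
    · intro a ha
      refine ⟨a - (-a), Set.sub_mem_sub ha (hs a ha), ?_⟩
      show (2⁻¹ : ℝ) • (a - -a) = a
      module
end

section
/- Let K₀ = {0, D} ⊆ ℝ with D > 0, and K_n = (1/2)(K_{n-1} - K_{n-1}). Then K_n = (D/2) · {k/2^{n-1} : k ∈ ℤ, |k| ≤ 2^{n-1}}, and the Hausdorff distance between K_n and [-D/2, D/2] equals D/2^{n+1}. -/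
open scoped Pointwise ENNReal

private def Sgrid (m : ℕ) : Set ℝ := { x : ℝ | ∃ k : ℤ, |k| ≤ 2 ^ m ∧ x = (k : ℝ) / 2 ^ m }


lemma Sgrid_step (m : ℕ) : (2⁻¹ : ℝ) • (Sgrid m - Sgrid m) = Sgrid (m+1) := by
  ext x
  simp only [Set.mem_smul_set, Set.mem_sub, Sgrid, Set.mem_setOf_eq]
  constructor
  · rintro ⟨y, ⟨a, ⟨ka, hka, rfl⟩, b, ⟨kb, hkb, rfl⟩, rfl⟩, rfl⟩
    refine ⟨ka - kb, ?_, ?_⟩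
    · rw [abs_le] at *; constructor <;> [skip; skip] <;> push_cast [pow_succ] at * <;> omega
    · push_cast [pow_succ]
      have : (2:ℝ)^m ≠ 0 := by positivity
      field_simp
      rw [smul_eq_mul]; field_simp
  · rintro ⟨k, hk, rfl⟩
    set a : ℤ := min (k + 2^m) (2^m) with ha
    refine ⟨(a:ℝ)/2^m - ((a - k : ℤ):ℝ)/2^m, ⟨(a:ℝ)/2^m, ⟨a, ?_, rfl⟩, ((a-k:ℤ):ℝ)/2^m, ⟨a - k, ?_, rfl⟩, rfl⟩, ?_⟩
    · rw [abs_le] at *; push_cast [pow_succ] at hk ⊢; omega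
    · rw [abs_le] at *; push_cast [pow_succ] at hk ⊢; omega
    · push_cast [pow_succ]
      have : (2:ℝ)^m ≠ 0 := by positivity
      field_simp
      rw [smul_eq_mul]; field_simp; ring


lemma smul_sub_set (c : ℝ) (A B : Set ℝ) : c • (A - B) = c • A - c • B := by
  ext x
  simp only [Set.mem_smul_set, Set.mem_sub]
  constructor
  · rintro ⟨y, ⟨a, ha, b, hb, rfl⟩, rfl⟩
    exact ⟨c * a, ⟨a, ha, rfl⟩, c * b, ⟨b, hb, rfl⟩, by simp [smul_eq_mul]; ring⟩
  · rintro ⟨u, ⟨a, ha, rfl⟩, v, ⟨b, hb, rfl⟩, rfl⟩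
    exact ⟨a - b, ⟨a, ha, b, hb, rfl⟩, by simp [smul_eq_mul]; ring⟩

lemma Sgrid_base (D : ℝ) : (2⁻¹ : ℝ) • (({0, D} : Set ℝ) - {0, D}) = (D/2) • Sgrid 0 := by
  ext x
  simp only [Set.mem_smul_set, Set.mem_sub, Sgrid, Set.mem_setOf_eq, Set.mem_insert_iff,
    Set.mem_singleton_iff]
  constructor
  · rintro ⟨y, ⟨a, ha, b, hb, rfl⟩, rfl⟩
    rcases ha with ha | ha <;> rcases hb with hb | hb <;> rw [ha, hb] <;>
      [ exact ⟨0, ⟨0, by norm_num⟩, by norm_num⟩;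
        exact ⟨-1, ⟨-1, by norm_num⟩, by simp [smul_eq_mul]; ring⟩;
        exact ⟨1, ⟨1, by norm_num⟩, by simp [smul_eq_mul]; ring⟩;
        exact ⟨0, ⟨0, by norm_num⟩, by simp [smul_eq_mul]⟩ ]
  · rintro ⟨y, ⟨k, hk, rfl⟩, rfl⟩
    rw [abs_le] at hk
    norm_num at hk
    have h3 : k = -1 ∨ k = 0 ∨ k = 1 := by omega
    rcases h3 with rfl | rfl | rfl
    · exact ⟨0 - D, ⟨0, Or.inl rfl, D, Or.inr rfl, rfl⟩, by push_cast; simp [smul_eq_mul]; ring⟩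
    · exact ⟨0 - 0, ⟨0, Or.inl rfl, 0, Or.inl rfl, rfl⟩, by push_cast; simp [smul_eq_mul]⟩
    · exact ⟨D - 0, ⟨D, Or.inr rfl, 0, Or.inl rfl, rfl⟩, by push_cast; simp [smul_eq_mul]; ring⟩


lemma Sgrid_haus (D : ℝ) (hD : 0 < D) (m : ℕ) :
    Metric.hausdorffDist ((D/2) • Sgrid m) (Set.Icc (-(D/2)) (D/2)) = D / 2 ^ (m+2) := by
  set s : Set ℝ := (D/2) • Sgrid m with hs
  set t : Set ℝ := Set.Icc (-(D/2)) (D/2) with ht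
  have hpow : (0:ℝ) < 2 ^ m := by positivity
  have hsub : s ⊆ t := by
    rintro x ⟨y, ⟨k, hk, rfl⟩, rfl⟩
    have hk' : |(k:ℝ)| ≤ 2 ^ m := by exact_mod_cast (by push_cast at hk ⊢; exact_mod_cast hk : (|k|:ℝ) ≤ 2 ^ m)
    rw [Set.mem_Icc, ← abs_le]
    have : |(D/2) • ((k:ℝ) / 2 ^ m)| = (D/2) * (|(k:ℝ)| / 2 ^ m) := by
      rw [smul_eq_mul, abs_mul, abs_div, abs_div, abs_of_pos hD, abs_of_pos hpow]
      norm_num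
    rw [this]
    calc (D/2) * (|(k:ℝ)| / 2 ^ m) ≤ (D/2) * 1 := by
          apply mul_le_mul_of_nonneg_left _ (by positivity)
          rw [div_le_one hpow]; exact hk'
      _ = D/2 := mul_one _
  have hne_s : s.Nonempty := ⟨(D/2) • ((0:ℝ)/2^m), ⟨(0:ℝ)/2^m, ⟨0, by simp⟩, rfl⟩⟩
  have hne_t : t.Nonempty := ⟨0, by constructor <;> [linarith; linarith]⟩
  have hbt : Bornology.IsBounded t := Metric.isBounded_Icc _ _
  have hfin : EMetric.hausdorffEdist s t ≠ ⊤ :=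
    Metric.hausdorffEdist_ne_top_of_nonempty_of_bounded hne_s hne_t (hbt.subset hsub) hbt
  have hr : (0:ℝ) < D / 2 ^ (m+2) := by positivity
  apply le_antisymm
  · apply Metric.hausdorffDist_le_of_mem_dist hr.le
    · intro x hx
      exact ⟨x, hsub hx, by simp [hr.le]⟩
    · intro x hx
      rw [ht, Set.mem_Icc] at hx
      set u : ℝ := x * 2 ^ (m+1) / D with hu
      set k : ℤ := round u with hkdef
      have hub : |u| ≤ 2 ^ m := by
        rw [hu, abs_div, abs_of_pos hD, abs_mul, abs_of_pos (by positivity : (0:ℝ) < 2^(m+1)),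
          div_le_iff₀ hD]
        have : |x| ≤ D / 2 := abs_le.2 ⟨by linarith [hx.1], hx.2⟩
        calc |x| * 2 ^ (m+1) ≤ (D/2) * 2^(m+1) := by
              apply mul_le_mul_of_nonneg_right this (by positivity)
          _ = 2 ^ m * D := by rw [pow_succ]; ring
      have hkb : |k| ≤ 2 ^ m := by
        have h1 : |u - (k:ℝ)| ≤ 1/2 := abs_sub_round u
        have h2 : |(k:ℝ)| ≤ 2 ^ m + 1/2 := by
          calc |(k:ℝ)| = |u - (u - k)| := by ring_nf
            _ ≤ |u| + |u - k| := abs_sub u (u - k)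
            _ ≤ 2 ^ m + 1/2 := add_le_add hub h1
        have h3 : (|k|:ℝ) < (2^m : ℤ) + 1 := by push_cast; linarith
        have h4 : |k| < 2 ^ m + 1 := by exact_mod_cast h3
        omega
      refine ⟨(D/2) • ((k:ℝ)/2^m), ⟨(k:ℝ)/2^m, ⟨k, hkb, rfl⟩, rfl⟩, ?_⟩
      have hxeq : x = u * D / 2 ^ (m+1) := by
        rw [hu]; field_simp
      have hyeq : (D/2) • ((k:ℝ)/2^m) = (k:ℝ) * D / 2^(m+1) := by
        rw [smul_eq_mul, pow_succ]; field_simp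
      rw [Real.dist_eq, hxeq, hyeq]
      have : u * D / 2 ^ (m+1) - (k:ℝ) * D / 2^(m+1) = (u - k) * (D / 2^(m+1)) := by ring
      rw [this, abs_mul, abs_of_pos (by positivity : (0:ℝ) < D / 2^(m+1))]
      calc |u - (k:ℝ)| * (D / 2^(m+1)) ≤ (1/2) * (D / 2^(m+1)) := by
            apply mul_le_mul_of_nonneg_right (abs_sub_round u) (by positivity)
        _ = D / 2 ^ (m+2) := by rw [pow_succ]; ring
  · set x₀ : ℝ := D / 2 ^ (m+2) with hx₀
    have hx₀t : x₀ ∈ t := by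
      rw [ht, Set.mem_Icc]
      constructor
      · have : (0:ℝ) < x₀ := hr
        linarith [hD]
      · rw [hx₀]
        have h2 : (2:ℝ) ≤ 2^(m+2) := by
          calc (2:ℝ) = 2^1 := (pow_one 2).symm
            _ ≤ 2^(m+2) := pow_le_pow_right₀ (by norm_num) (by omega)
        gcongr <;> first | exact hD.le | exact h2
    have hinf : D / 2 ^ (m+2) ≤ Metric.infDist x₀ s := by
      by_contra hcon
      rw [not_le, Metric.infDist_lt_iff hne_s] at hcon
      obtain ⟨y, hy, hdy⟩ := hcon
      revert hdy
      rw [imp_false, not_lt]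
      obtain ⟨z, ⟨k, hk, rfl⟩, rfl⟩ := hy
      rw [Real.dist_eq]
      have heq : x₀ - (D/2) • ((k:ℝ)/2^m) = ((1 - 2*k : ℤ) : ℝ) * (D / 2^(m+2)) := by
        rw [hx₀, smul_eq_mul]
        push_cast
        have h1 : (2:ℝ)^(m+2) = 2^m * 4 := by rw [pow_add]; norm_num
        rw [h1]; field_simp; ring
      rw [heq, abs_mul, abs_of_pos hr]
      have hodd : (1:ℝ) ≤ |((1 - 2*k : ℤ) : ℝ)| := by
        have : 1 ≤ |(1 - 2*k : ℤ)| := Int.one_le_abs (by omega)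
        calc (1:ℝ) = ((1:ℤ):ℝ) := by norm_num
          _ ≤ ((|1 - 2*k|:ℤ):ℝ) := by exact_mod_cast this
          _ = |((1 - 2*k : ℤ) : ℝ)| := by push_cast; ring
      nlinarith
    calc D / 2 ^ (m+2) ≤ Metric.infDist x₀ s := hinf
      _ ≤ Metric.hausdorffDist t s := Metric.infDist_le_hausdorffDist_of_mem hx₀t
          (by rwa [EMetric.hausdorffEdist_comm])
      _ = Metric.hausdorffDist s t := Metric.hausdorffDist_comm

lemma K_formula (D : ℝ) (K : ℕ → Set ℝ)
    (hK0 : K 0 = {0, D})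
    (hK : ∀ n, K (n + 1) = (2⁻¹ : ℝ) • (K n - K n)) :
    ∀ m, K (m + 1) = (D / 2) • Sgrid m := by
  intro m
  induction m with
  | zero => rw [hK 0, hK0, Sgrid_base]
  | succ m ih =>
      rw [hK (m+1), ih, ← smul_sub_set, smul_comm, Sgrid_step]

theorem BS_two_points
    (D : ℝ) (hD : 0 < D) (K : ℕ → Set ℝ)
    (hK0 : K 0 = {0, D})
    (hK : ∀ n, K (n + 1) = (2⁻¹ : ℝ) • (K n - K n)) :
    ∀ n, 1 ≤ n →
      (K n = (D / 2) • { x : ℝ | ∃ k : ℤ, |k| ≤ 2 ^ (n - 1) ∧ x = (k : ℝ) / 2 ^ (n - 1) }) ∧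
      Metric.hausdorffDist (K n) (Set.Icc (-(D / 2)) (D / 2)) = D / 2 ^ (n + 1) := by
  rintro (_ | m) hn
  · omega
  · have hform : K (m + 1) = (D / 2) • Sgrid m := K_formula D K hK0 hK m
    refine ⟨?_, ?_⟩
    · simpa [Sgrid] using hform
    · rw [hform]
      simpa using Sgrid_haus D hD m
end

section
/- Let K₀ ⊆ ℝ be compact with positive Lebesgue measure and diameter D, and K_n = (1/2)(K_{n-1} - K_{n-1}). Then lim_{n→∞} Vol(K_n) = D, and the indicators 1_{K_n} converge to 1_{[-D/2, D/2]} in L¹(ℝ). -/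
open scoped Pointwise ENNReal

open MeasureTheory Filter

lemma BS_mem_step {A : Set ℝ} {a b : ℝ} (ha : a ∈ A) (hb : b ∈ A) :
    (2⁻¹ : ℝ) * (a - b) ∈ (2⁻¹ : ℝ) • (A - A) :=
  ⟨a - b, Set.sub_mem_sub ha hb, rfl⟩

lemma BS_mem_dest {A : Set ℝ} {x : ℝ} (hx : x ∈ (2⁻¹ : ℝ) • (A - A)) :
    ∃ a ∈ A, ∃ b ∈ A, x = 2⁻¹ * (a - b) := by
  obtain ⟨y, hy, rfl⟩ := hx
  obtain ⟨a, ha, b, hb, rfl⟩ := hy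
  exact ⟨a, ha, b, hb, rfl⟩

set_option maxHeartbeats 2000000 in
theorem BS_one_dim_volume
    (K : ℕ → Set ℝ) (hcpt : IsCompact (K 0))
    (hpos : 0 < volume (K 0))
    (hK : ∀ n, K (n + 1) = (2⁻¹ : ℝ) • (K n - K n)) :
    Tendsto (fun n => (volume (K n)).toReal) atTop (nhds (Metric.diam (K 0))) ∧
    Tendsto (fun n => ∫ x : ℝ,
        |(K n).indicator (fun _ => (1:ℝ)) x -
          (Set.Icc (-(Metric.diam (K 0) / 2)) (Metric.diam (K 0) / 2)).indicator
            (fun _ => (1:ℝ)) x|) atTop (nhds 0) := by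
  obtain ⟨D, hD_def⟩ : ∃ D : ℝ, Metric.diam (K 0) = D := ⟨_, rfl⟩
  rw [hD_def]
  have hne0 : (K 0).Nonempty := nonempty_of_measure_ne_zero hpos.ne'
  have hbdd : Bornology.IsBounded (K 0) := hcpt.isBounded
  -- D > 0
  have hD0 : 0 < D := by
    rcases hne0 with ⟨a, ha⟩
    rcases lt_or_ge 0 D with h | h
    · exact h
    · exfalso
      have hD0' : D = 0 := le_antisymm h (hD_def ▸ Metric.diam_nonneg)
      have hsub : K 0 ⊆ {a} := by
        intro y hy
        have h1 := Metric.dist_le_diam_of_mem hbdd hy ha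
        rw [hD_def, hD0'] at h1
        have h2 : y = a := by
          rw [Real.dist_eq] at h1
          have h3 := abs_nonneg (y - a)
          have h4 : |y - a| = 0 := le_antisymm h1 h3
          have := abs_eq_zero.mp h4
          linarith
        simp [h2]
      have : volume (K 0) = 0 := measure_mono_null hsub (by simp)
      exact hpos.ne' this
  -- compactness
  have hcptn : ∀ n, IsCompact (K n) := by
    intro n
    induction n with
    | zero => exact hcpt
    | succ m ih =>
      rw [hK m]
      have h1 : IsCompact (K m - K m) := by
        rw [sub_eq_add_neg]
        exact ih.add ih.neg
      exact h1.smul _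
  -- nonemptiness
  have hnen : ∀ n, (K n).Nonempty := by
    intro n
    induction n with
    | zero => exact hne0
    | succ m ih =>
      obtain ⟨a, ha⟩ := ih
      exact ⟨2⁻¹ * (a - a), by rw [hK m]; exact BS_mem_step ha ha⟩
  -- symmetry
  have hsymm : ∀ n, 1 ≤ n → ∀ x, x ∈ K n → -x ∈ K n := by
    intro n hn x hx
    obtain ⟨m, rfl⟩ := Nat.exists_eq_succ_of_ne_zero (by omega : n ≠ 0)
    rw [hK m] at hx ⊢
    obtain ⟨a, ha, b, hb, rfl⟩ := BS_mem_dest hx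
    have h1 : -(2⁻¹ * (a - b)) = 2⁻¹ * (b - a) := by ring
    rw [h1]
    exact BS_mem_step hb ha
  -- zero membership
  have hzero : ∀ n, 1 ≤ n → (0:ℝ) ∈ K n := by
    intro n hn
    obtain ⟨m, rfl⟩ := Nat.exists_eq_succ_of_ne_zero (by omega : n ≠ 0)
    obtain ⟨a, ha⟩ := hnen m
    rw [hK m]
    have h1 : (0:ℝ) = 2⁻¹ * (a - a) := by ring
    rw [h1]
    exact BS_mem_step ha ha
  -- contained in the interval
  have hIcc : ∀ n, 1 ≤ n → K n ⊆ Set.Icc (-(D/2)) (D/2) := by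
    intro n hn
    induction n with
    | zero => omega
    | succ m ih =>
      intro x hx
      rw [hK m] at hx
      obtain ⟨a, ha, b, hb, rfl⟩ := BS_mem_dest hx
      rcases Nat.eq_zero_or_pos m with rfl | hm
      · have h1 := Metric.dist_le_diam_of_mem hbdd ha hb
        rw [Real.dist_eq, hD_def] at h1
        have h2 := abs_le.mp h1
        constructor <;> [nlinarith [h2.1]; nlinarith [h2.2]]
      · have ha' := ih hm ha
        have hb' := ih hm hb
        simp only [Set.mem_Icc] at ha' hb' ⊢
        constructor <;> [nlinarith [ha'.1, hb'.2]; nlinarith [ha'.2, hb'.1]]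
  -- monotone
  have hmono : ∀ n, 1 ≤ n → K n ⊆ K (n + 1) := by
    intro n hn x hx
    have hmx := hsymm n hn x hx
    rw [hK n]
    have h1 : x = 2⁻¹ * (x - -x) := by ring
    rw [h1]
    exact BS_mem_step hx hmx
  have hmono' : ∀ m n, 1 ≤ m → m ≤ n → K m ⊆ K n := by
    intro m n hm hmn
    induction n, hmn using Nat.le_induction with
    | base => exact subset_rfl
    | succ n hmn ih => exact ih.trans (hmono n (by omega))
  -- endpoints D/2, -D/2 belong to K n for n ≥ 1
  have hhalf : ∀ n, 1 ≤ n → D / 2 ∈ K n := by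
    have h1 : D / 2 ∈ K 1 := by
      have hMmem : sSup (K 0) ∈ K 0 := hcpt.sSup_mem hne0
      have hmmem : sInf (K 0) ∈ K 0 := hcpt.sInf_mem hne0
      have hdiam : D = sSup (K 0) - sInf (K 0) := by
        apply le_antisymm
        · have hsub : K 0 ⊆ Set.Icc (sInf (K 0)) (sSup (K 0)) := fun x hx =>
            ⟨csInf_le hbdd.bddBelow hx, le_csSup hbdd.bddAbove hx⟩
          have h2 := Metric.diam_mono hsub (Metric.isBounded_Icc _ _)
          rwa [Real.diam_Icc (le_trans (csInf_le hbdd.bddBelow hMmem)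
            (le_csSup hbdd.bddAbove hMmem)), hD_def] at h2
        · have h3 := Metric.dist_le_diam_of_mem hbdd hMmem hmmem
          rw [Real.dist_eq, hD_def] at h3
          exact le_trans (le_abs_self _) h3
      rw [hK 0]
      have h4 : D / 2 = 2⁻¹ * (sSup (K 0) - sInf (K 0)) := by rw [← hdiam]; ring
      rw [h4]
      exact BS_mem_step hMmem hmmem
    intro n hn
    induction n, hn using Nat.le_induction with
    | base => exact h1
    | succ n hn ih =>
      have hneg : -(D/2) ∈ K n := hsymm n hn _ ih
      rw [hK n]
      have h2 : D / 2 = 2⁻¹ * (D/2 - -(D/2)) := by ring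
      rw [h2]
      exact BS_mem_step ih hneg
  -- Steinhaus: a small interval inside K 1
  have hstein : ∃ ε : ℝ, 0 < ε ∧ ε ≤ D / 2 ∧ Set.Icc (-ε) ε ⊆ K 1 := by
    have hnhds : K 0 - K 0 ∈ nhds (0:ℝ) :=
      MeasureTheory.Measure.sub_mem_nhds_zero_of_addHaar_pos volume (K 0)
        hcpt.measurableSet hpos
    obtain ⟨δ, hδ0, hδ⟩ := Metric.mem_nhds_iff.mp hnhds
    refine ⟨min (δ/4) (D/2), by positivity, min_le_right _ _, ?_⟩
    intro x hx
    simp only [Set.mem_Icc] at hx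
    have hxb : |2 * x| < δ := by
      have h1 : |x| ≤ min (δ/4) (D/2) := abs_le.mpr hx
      have h2 : |x| ≤ δ/4 := le_trans h1 (min_le_left _ _)
      rw [abs_mul, abs_two]
      nlinarith
    have hmem : (2*x) ∈ K 0 - K 0 := by
      apply hδ
      simp only [Metric.mem_ball, Real.dist_eq, sub_zero]
      exact hxb
    obtain ⟨a, ha, b, hb, hab⟩ := hmem
    rw [hK 0]
    have h3 : x = 2⁻¹ * (a - b) := by
      have h4 : a - b = 2 * x := hab
      rw [h4]; ring
    rw [h3]
    exact BS_mem_step ha hb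
  obtain ⟨ε, hε0, hεD, hεK⟩ := hstein
  have hεn : ∀ n, 1 ≤ n → Set.Icc (-ε) ε ⊆ K n := by
    intro n hn
    exact hεK.trans (hmono' 1 n le_rfl hn)
  -- dyadic points
  have hdyadic : ∀ m : ℕ, ∀ j : ℤ, |j| ≤ 2^m → (j : ℝ) * (D / 2^(m+1)) ∈ K (m + 2) := by
    intro m
    induction m with
    | zero =>
      intro j hj
      have hj2 := abs_le.mp hj
      have hj' : j = -1 ∨ j = 0 ∨ j = 1 := by omega
      rcases hj' with rfl | rfl | rfl
      · have h1 : ((-1 : ℤ) : ℝ) * (D / 2^(0+1)) = -(D/2) := by push_cast; ring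
        rw [h1]
        exact hsymm 2 (by omega) _ (hhalf 2 (by omega))
      · simpa using hzero 2 (by omega)
      · have h1 : ((1 : ℤ) : ℝ) * (D / 2^(0+1)) = D/2 := by push_cast; ring
        rw [h1]
        exact hhalf 2 (by omega)
    | succ m ih =>
      intro j hj
      have hjabs := abs_le.mp hj
      have hc : (0:ℤ) < 2^m := by positivity
      have h2 : (2:ℤ)^(m+1) = 2 * 2^m := by ring
      rw [h2] at hjabs
      have hb1 : -(2^m) ≤ j - j / 2 ∧ j - j / 2 ≤ 2^m := by constructor <;> omega
      have hb2 : -(2^m) ≤ -(j / 2) ∧ -(j / 2) ≤ 2^m := by constructor <;> omega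
      have hm1 := ih (j - j / 2) (abs_le.mpr hb1)
      have hm2 := ih (-(j / 2)) (abs_le.mpr hb2)
      have heq : (j : ℝ) * (D / 2^(m+1+1)) =
          2⁻¹ * (((j - j / 2 : ℤ) : ℝ) * (D / 2^(m+1)) - ((-(j / 2) : ℤ) : ℝ) * (D / 2^(m+1))) := by
        have hsum : (j - j / 2 : ℤ) - (-(j / 2)) = j := by omega
        have hcast : ((j - j / 2 : ℤ) : ℝ) - ((-(j / 2) : ℤ) : ℝ) = (j : ℝ) := by
          rw [← Int.cast_sub, hsum]
        have hpow : (2:ℝ)^(m+1+1) = 2 * 2^(m+1) := by ring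
        rw [← sub_mul, hcast, hpow]
        have h2ne : (2:ℝ)^(m+1) ≠ 0 := by positivity
        field_simp
      have h3 : m + 1 + 2 = (m + 2) + 1 := by omega
      rw [h3, hK (m+2), heq]
      exact BS_mem_step hm1 hm2
  -- choose scale m₀ and opaque data s
  obtain ⟨m₀, hm₀⟩ : ∃ m₀ : ℕ, D / 2^(m₀+2) ≤ ε := by
    obtain ⟨k, hk⟩ := pow_unbounded_of_one_lt (D / ε) (one_lt_two (α := ℝ))
    refine ⟨k, ?_⟩
    have h1 : D / 2^k ≤ ε := by
      rw [div_le_iff₀ (by positivity)]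
      rw [div_lt_iff₀ hε0] at hk
      nlinarith [pow_pos (zero_lt_two (α := ℝ)) k]
    have h2 : D / 2^(k+2) ≤ D / 2^k := by
      apply div_le_div_of_nonneg_left hD0.le (by positivity)
      exact pow_le_pow_right₀ one_le_two (by omega)
    linarith
  obtain ⟨s, hs0, hs2ε, hsmax, hS⟩ :
      ∃ s : ℝ, 0 < s ∧ s ≤ 2 * ε ∧ (2:ℝ)^m₀ * s = D / 2 ∧
        ∀ n, m₀ + 2 ≤ n → ∀ j : ℤ, |j| ≤ 2^m₀ → (j:ℝ) * s ∈ K n := by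
    refine ⟨D / 2^(m₀+1), by positivity, ?_, ?_, ?_⟩
    · have h1 : D / 2^(m₀+1) = 2 * (D / 2^(m₀+2)) := by
        have h2 : (2:ℝ)^(m₀+2) = 2 * 2^(m₀+1) := by ring
        rw [h2]
        field_simp
      rw [h1]; linarith
    · have h2ne : ((2:ℝ)^(m₀+1)) ≠ 0 := by positivity
      have h3 : (2:ℝ)^(m₀+1) = 2^m₀ * 2 := by ring
      rw [h3]
      field_simp
    · intro n hn j hj
      exact hmono' (m₀+2) n (by omega) hn (hdyadic m₀ j hj)
  -- the growing sequence, opaque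
  obtain ⟨b, hb0, hbε, hbD, hbrec, hbtend⟩ :
      ∃ b : ℕ → ℝ, b 0 = ε ∧ (∀ k, ε ≤ b k) ∧ (∀ k, b k ≤ D/2) ∧
        (∀ k, 2 * b (k+1) = D/2 + b k) ∧
        Tendsto (fun k => 2 * b k) atTop (nhds D) := by
    refine ⟨fun k => D/2 - (D/2 - ε) / 2^k, by simp, ?_, ?_, ?_, ?_⟩
    · intro k
      have h1 : (D/2 - ε) / 2^k ≤ (D/2 - ε) / 1 :=
        div_le_div_of_nonneg_left (by linarith) one_pos (one_le_pow₀ one_le_two)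
      simp only
      rw [div_one] at h1
      linarith
    · intro k
      have h1 : 0 ≤ (D/2 - ε) / 2^k := div_nonneg (by linarith) (by positivity)
      simp only
      linarith
    · intro k
      have h1 : (2:ℝ)^(k+1) = 2 * 2^k := by ring
      simp only
      rw [h1]
      have h2 : ((2:ℝ)^k) ≠ 0 := by positivity
      field_simp
      ring
    · have h1 : Tendsto (fun k : ℕ => ((1:ℝ)/2)^k) atTop (nhds 0) :=
        tendsto_pow_atTop_nhds_zero_of_lt_one (by norm_num) (by norm_num)
      have h2 : Tendsto (fun k : ℕ => 2 * (D/2 - (D/2 - ε) * ((1:ℝ)/2)^k)) atTop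
          (nhds (2 * (D/2 - (D/2 - ε) * 0))) :=
        tendsto_const_nhds.mul (tendsto_const_nhds.sub (tendsto_const_nhds.mul h1))
      have h3 : (fun k : ℕ => 2 * (D/2 - (D/2 - ε) * ((1:ℝ)/2)^k))
          = (fun k : ℕ => 2 * (D/2 - (D/2 - ε) / 2^k)) := by
        funext k
        rw [div_pow, one_pow]
        ring
      rw [h3] at h2
      convert h2 using 2
      ring
  -- growth of intervals
  have hgrow : ∀ k, Set.Icc (-(b k)) (b k) ⊆ K (m₀ + 2 + k) := by
    intro k
    induction k with
    | zero =>
      rw [hb0]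
      exact hεn (m₀ + 2) (by omega)
    | succ k ih =>
      intro x hx
      simp only [Set.mem_Icc] at hx
      have hεbk := hbε k
      have hxub : 2 * x ≤ D/2 + b k := by
        have h1 := hbrec k
        linarith [hx.2]
      have hxlb : -(D/2 + b k) ≤ 2 * x := by
        have h1 := hbrec k
        linarith [hx.1]
      -- generic finishing move
      have hfin : ∀ j : ℤ, |j| ≤ 2^m₀ → |2 * x - (j:ℝ) * s| ≤ b k →
          x ∈ K (m₀ + 2 + (k + 1)) := by
        intro j hj hclose
        have hmem1 : (j:ℝ) * s ∈ K (m₀ + 2 + k) := hS (m₀ + 2 + k) (by omega) j hj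
        have hmem2 : (j:ℝ) * s - 2 * x ∈ K (m₀ + 2 + k) := by
          apply ih
          simp only [Set.mem_Icc]
          have h5 : |(j:ℝ) * s - 2 * x| ≤ b k := by rw [abs_sub_comm]; exact hclose
          exact abs_le.mp h5
        have hstep : m₀ + 2 + (k + 1) = (m₀ + 2 + k) + 1 := by omega
        rw [hstep, hK (m₀ + 2 + k)]
        have hxe : x = 2⁻¹ * ((j:ℝ) * s - ((j:ℝ) * s - 2 * x)) := by ring
        rw [hxe]
        exact BS_mem_step hmem1 hmem2
      have hround : |2 * x / s - (round (2 * x / s) : ℝ)| ≤ 1/2 := abs_sub_round _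
      have hroundx : |2 * x - (round (2 * x / s) : ℝ) * s| ≤ s / 2 := by
        have h2 : 2 * x - (round (2 * x / s) : ℝ) * s = (2 * x / s - (round (2 * x / s) : ℝ)) * s := by
          field_simp
        rw [h2, abs_mul, abs_of_pos hs0]
        calc |2 * x / s - (round (2 * x / s) : ℝ)| * s ≤ (1/2) * s :=
              mul_le_mul_of_nonneg_right hround hs0.le
          _ = s / 2 := by ring
      have hc : (0:ℤ) < 2^m₀ := by positivity
      rcases le_or_gt (round (2 * x / s)) (2^m₀) with hup | hup
      · rcases le_or_gt (-(2^m₀)) (round (2 * x / s)) with hlo | hlo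
        · -- use j = round
          apply hfin (round (2 * x / s)) (abs_le.mpr ⟨hlo, hup⟩)
          refine le_trans hroundx ?_
          linarith
        · -- round < -(2^m₀) : use j = -(2^m₀)
          apply hfin (-(2^m₀)) (by rw [abs_neg, abs_pow, abs_two])
          have hjr : (((-(2^m₀) : ℤ)) : ℝ) * s = -(D/2) := by
            push_cast
            rw [neg_mul, hsmax]
          rw [hjr]
          have hj₀s : ((round (2 * x / s) : ℤ) : ℝ) ≤ -(2^m₀:ℝ) - 1 := by
            have h6 : (round (2 * x / s) : ℤ) ≤ -(2^m₀) - 1 := by omega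
            calc ((round (2 * x / s) : ℤ) : ℝ) ≤ ((-(2^m₀) - 1 : ℤ) : ℝ) := by exact_mod_cast h6
              _ = -(2^m₀:ℝ) - 1 := by push_cast; ring
          have habs := abs_le.mp hroundx
          have h3 : 2 * x ≤ ((round (2 * x / s) : ℤ) : ℝ) * s + s/2 := by linarith [habs.2]
          have h4 : ((round (2 * x / s) : ℤ) : ℝ) * s ≤ (-(2^m₀:ℝ) - 1) * s :=
            mul_le_mul_of_nonneg_right hj₀s hs0.le
          have h2m : ((2:ℝ)^m₀) * s = D / 2 := hsmax
          rw [abs_le]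
          constructor
          · linarith
          · nlinarith
      · -- round > 2^m₀ : use j = 2^m₀
        apply hfin (2^m₀) (by rw [abs_pow, abs_two])
        have hjr : (((2^m₀ : ℤ)) : ℝ) * s = D/2 := by
          push_cast
          rw [hsmax]
        rw [hjr]
        have hj₀s : (2^m₀:ℝ) + 1 ≤ ((round (2 * x / s) : ℤ) : ℝ) := by
          have h6 : (2^m₀ : ℤ) + 1 ≤ (round (2 * x / s) : ℤ) := by omega
          calc ((2^m₀:ℝ)) + 1 = (((2^m₀ : ℤ) + 1 : ℤ) : ℝ) := by push_cast; ring
            _ ≤ ((round (2 * x / s) : ℤ) : ℝ) := by exact_mod_cast h6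
        have habs := abs_le.mp hroundx
        have h3 : ((round (2 * x / s) : ℤ) : ℝ) * s - s/2 ≤ 2 * x := by linarith [habs.1]
        have h4 : ((2^m₀:ℝ) + 1) * s ≤ ((round (2 * x / s) : ℤ) : ℝ) * s :=
          mul_le_mul_of_nonneg_right hj₀s hs0.le
        have h2m : ((2:ℝ)^m₀) * s = D / 2 := hsmax
        rw [abs_le]
        constructor
        · nlinarith
        · linarith
  -- volume bounds
  have hvol_ub : ∀ n, 1 ≤ n → volume (K n) ≤ ENNReal.ofReal D := by
    intro n hn
    have h1 : volume (K n) ≤ volume (Set.Icc (-(D/2)) (D/2)) := measure_mono (hIcc n hn)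
    rwa [Real.volume_Icc, show D/2 - -(D/2) = D by ring] at h1
  have hvol_fin : ∀ n, 1 ≤ n → volume (K n) ≠ ⊤ := by
    intro n hn
    exact ne_top_of_le_ne_top ENNReal.ofReal_ne_top (hvol_ub n hn)
  have hf_ub : ∀ n, 1 ≤ n → (volume (K n)).toReal ≤ D := by
    intro n hn
    exact ENNReal.toReal_le_of_le_ofReal hD0.le (hvol_ub n hn)
  have hf_lb : ∀ k n, m₀ + 2 + k ≤ n → 2 * b k ≤ (volume (K n)).toReal := by
    intro k n hkn
    have hsub : Set.Icc (-(b k)) (b k) ⊆ K n :=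
      (hgrow k).trans (hmono' (m₀ + 2 + k) n (by omega) hkn)
    have h1 : ENNReal.ofReal (2 * b k) ≤ volume (K n) := by
      have h2 : volume (Set.Icc (-(b k)) (b k)) ≤ volume (K n) := measure_mono hsub
      rwa [Real.volume_Icc, show b k - -(b k) = 2 * b k by ring] at h2
    exact (ENNReal.ofReal_le_iff_le_toReal (hvol_fin n (by omega))).mp h1
  -- part 1 : squeeze
  have htend1 : Tendsto (fun n => (volume (K n)).toReal) atTop (nhds D) := by
    have hg : Tendsto (fun n : ℕ => 2 * b (n - (m₀ + 2))) atTop (nhds D) :=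
      hbtend.comp (tendsto_sub_atTop_nat (m₀ + 2))
    apply tendsto_of_tendsto_of_tendsto_of_le_of_le' hg tendsto_const_nhds
    · filter_upwards [eventually_ge_atTop (m₀ + 2)] with n hn
      exact hf_lb (n - (m₀ + 2)) n (by omega)
    · filter_upwards [eventually_ge_atTop 1] with n hn
      exact hf_ub n hn
  refine ⟨htend1, ?_⟩
  -- part 2
  have hint : ∀ n, 1 ≤ n →
      (∫ x : ℝ, |(K n).indicator (fun _ => (1:ℝ)) x -
        (Set.Icc (-(D / 2)) (D / 2)).indicator (fun _ => (1:ℝ)) x|)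
      = D - (volume (K n)).toReal := by
    intro n hn
    have hmeasK : MeasurableSet (K n) := (hcptn n).measurableSet
    have hkey : (fun x : ℝ => |(K n).indicator (fun _ => (1:ℝ)) x -
        (Set.Icc (-(D / 2)) (D / 2)).indicator (fun _ => (1:ℝ)) x|)
        = (Set.Icc (-(D / 2)) (D / 2) \ K n).indicator (fun _ => (1:ℝ)) := by
      funext x
      by_cases hx : x ∈ K n
      · have hxI : x ∈ Set.Icc (-(D / 2)) (D / 2) := hIcc n hn hx
        rw [Set.indicator_of_mem hx, Set.indicator_of_mem hxI,
          Set.indicator_of_notMem (by simp [hx])]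
        simp
      · rw [Set.indicator_of_notMem hx]
        by_cases hxI : x ∈ Set.Icc (-(D / 2)) (D / 2)
        · rw [Set.indicator_of_mem hxI, Set.indicator_of_mem (show x ∈ Set.Icc (-(D / 2)) (D / 2) \ K n from ⟨hxI, hx⟩)]
          simp
        · rw [Set.indicator_of_notMem hxI,
            Set.indicator_of_notMem (fun h => hxI h.1)]
          simp
    rw [hkey]
    have hmeas : MeasurableSet (Set.Icc (-(D / 2)) (D / 2) \ K n) :=
      measurableSet_Icc.diff hmeasK
    have hintval : (∫ x : ℝ, (Set.Icc (-(D / 2)) (D / 2) \ K n).indicator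
        (fun _ => (1:ℝ)) x) = (volume (Set.Icc (-(D / 2)) (D / 2) \ K n)).toReal := by
      rw [MeasureTheory.integral_indicator hmeas]
      simp
      rfl
    rw [hintval]
    have hdiff : volume (Set.Icc (-(D / 2)) (D / 2) \ K n)
        = volume (Set.Icc (-(D / 2)) (D / 2)) - volume (K n) :=
      measure_diff (hIcc n hn) hmeasK.nullMeasurableSet (hvol_fin n hn)
    have hle : volume (K n) ≤ ENNReal.ofReal D := hvol_ub n hn
    rw [hdiff, Real.volume_Icc, show D/2 - -(D/2) = D by ring,
      ENNReal.toReal_sub_of_le hle ENNReal.ofReal_ne_top,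
      ENNReal.toReal_ofReal hD0.le]
  have h2 : Tendsto (fun n => D - (volume (K n)).toReal) atTop (nhds (D - D)) :=
    tendsto_const_nhds.sub htend1
  rw [sub_self] at h2
  apply h2.congr'
  filter_upwards [eventually_ge_atTop 1] with n hn
  exact (hint n hn).symm
end

section
/- Let K₀ ⊆ ℝ be compact of positive Lebesgue measure with diameter D. Then for every ε > 0 there exists N such that for all n ≥ N, the 2^{n-1}-fold sumset K₀^{[2^{n-1}]} satisfies [-2^{n-1}(D-2ε), 2^{n-1}(D-2ε)] ⊆ K₀^{[2^{n-1}]} - K₀^{[2^{n-1}]} ⊆ [-2^{n-1}D, 2^{n-1}D]. -/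
open MeasureTheory Pointwise

private lemma sum_ite_const (m k : ℕ) (hk : k ≤ m) (c d : ℝ) :
    (∑ i : Fin m, (if (i : ℕ) < k then c else d)) = k * c + (m - k : ℕ) * d := by
  rw [Finset.sum_ite]
  have h1 : (Finset.univ.filter (fun i : Fin m => (i : ℕ) < k)).card = k := by
    rw [Finset.card_filter, Fin.sum_univ_eq_sum_range (fun i => if i < k then 1 else 0),
      ← Finset.card_filter]
    have : (Finset.range m).filter (fun i => i < k) = Finset.range k := by
      ext x; simp only [Finset.mem_filter, Finset.mem_range]; omega
    rw [this, Finset.card_range]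
  have h2 : (Finset.univ.filter (fun i : Fin m => k ≤ (i : ℕ))).card = m - k := by
    rw [Finset.card_filter, Fin.sum_univ_eq_sum_range (fun i => if k ≤ i then 1 else 0),
      ← Finset.card_filter]
    have : (Finset.range m).filter (fun i => k ≤ i) = Finset.Ico k m := by
      ext x; simp only [Finset.mem_filter, Finset.mem_range, Finset.mem_Ico]; omega
    rw [this, Nat.card_Ico]
  simp [h1, h2, mul_comm, not_lt]

theorem BS_sumset
    (K₀ : Set ℝ) (hcpt : IsCompact K₀) (hpos : 0 < volume K₀) (D : ℝ)
    (hD : D = Metric.diam K₀) :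
    ∀ ε : ℝ, 0 < ε → ∃ N : ℕ, ∀ n : ℕ, N ≤ n →
      Set.Icc (-(2 ^ (n - 1) * (D - 2 * ε))) (2 ^ (n - 1) * (D - 2 * ε)) ⊆
        { y : ℝ | ∃ f g : Fin (2 ^ (n - 1)) → ℝ, (∀ i, f i ∈ K₀) ∧ (∀ i, g i ∈ K₀) ∧
            y = (∑ i, f i) - ∑ i, g i } ∧
      { y : ℝ | ∃ f g : Fin (2 ^ (n - 1)) → ℝ, (∀ i, f i ∈ K₀) ∧ (∀ i, g i ∈ K₀) ∧
            y = (∑ i, f i) - ∑ i, g i } ⊆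
        Set.Icc (-(2 ^ (n - 1) * D)) (2 ^ (n - 1) * D) := by
  intro ε hε
  have hne : K₀.Nonempty := nonempty_of_measure_ne_zero hpos.ne'
  have hbdd : Bornology.IsBounded K₀ := hcpt.isBounded
  set a := sInf K₀ with ha
  set b := sSup K₀ with hb
  have haK : a ∈ K₀ := hcpt.sInf_mem hne
  have hbK : b ∈ K₀ := hcpt.sSup_mem hne
  have hDba : D = b - a := by rw [hD, Real.diam_eq hbdd]
  have hsub : K₀ ⊆ Set.Icc a b := fun x hx =>
    ⟨csInf_le hbdd.bddBelow hx, le_csSup hbdd.bddAbove hx⟩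
  have hD0 : 0 < D := by
    by_contra h
    push_neg at h
    have : volume K₀ ≤ volume (Set.Icc a b) := measure_mono hsub
    rw [Real.volume_Icc] at this
    have hba : b - a ≤ 0 := by rw [hDba] at h; linarith
    simp [ENNReal.ofReal_eq_zero.2 hba] at this
    exact absurd this (by simpa using hpos.ne')
  -- Steinhaus
  have hstein : K₀ - K₀ ∈ nhds (0 : ℝ) :=
    MeasureTheory.Measure.sub_mem_nhds_zero_of_addHaar_pos volume K₀
      hcpt.measurableSet hpos
  obtain ⟨δ, hδ0, hδ⟩ := Metric.mem_nhds_iff.1 hstein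
  have hδmem : ∀ r : ℝ, |r| < δ → ∃ x ∈ K₀, ∃ y ∈ K₀, x - y = r := by
    intro r hr
    have : r ∈ K₀ - K₀ := hδ (by simpa [Real.dist_eq] using hr)
    exact Set.mem_sub.1 this
  -- key construction
  have key : ∀ m : ℕ, D ^ 2 / (2 * ε * δ) < m → ∀ t : ℝ, 0 ≤ t → t ≤ m * (D - 2 * ε) →
      ∃ f g : Fin m → ℝ, (∀ i, f i ∈ K₀) ∧ (∀ i, g i ∈ K₀) ∧
        t = (∑ i, f i) - ∑ i, g i := by
    intro m hm t ht0 htle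
    set k : ℕ := ⌊t / D⌋₊ with hk
    have htD : 0 ≤ t / D := div_nonneg ht0 hD0.le
    have hkle : (k : ℝ) * D ≤ t := by
      have := Nat.floor_le htD
      calc (k : ℝ) * D ≤ (t / D) * D := by nlinarith [this]
        _ = t := div_mul_cancel₀ t hD0.ne'
    have hklt : t < ((k : ℝ) + 1) * D := by
      have := Nat.lt_floor_add_one (t / D)
      calc t = (t / D) * D := (div_mul_cancel₀ t hD0.ne').symm
        _ < ((k : ℝ) + 1) * D := by nlinarith [this]
    set r : ℝ := t - k * D with hr
    have hr0 : 0 ≤ r := by simp [hr]; linarith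
    have hrD : r < D := by simp [hr]; nlinarith
    -- k + D/δ < m
    have hkm : (k : ℝ) + D / δ < m := by
      have h1 : (k : ℝ) * D ≤ m * (D - 2 * ε) := le_trans hkle htle
      have h2 : (k : ℝ) ≤ m - 2 * ε * m / D := by
        have hexp : ((m : ℝ) - 2 * ε * m / D) * D = m * (D - 2 * ε) := by
          field_simp
        exact (mul_le_mul_iff_of_pos_right hD0).mp (by rw [hexp]; exact le_trans hkle htle)
      have h3 : D / δ < 2 * ε * m / D := by
        rw [div_lt_div_iff₀ hδ0 hD0]
        have := (div_lt_iff₀ (by positivity : (0:ℝ) < 2 * ε * δ)).1 hm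
        nlinarith
      linarith
    have hklm : k < m := by
      have : (k : ℝ) < m := lt_of_le_of_lt (le_add_of_nonneg_right (by positivity)) hkm
      exact_mod_cast this
    set j : ℕ := m - k with hj
    have hjpos : 0 < j := Nat.sub_pos_of_lt hklm
    have hjr : (j : ℝ) = (m : ℝ) - k := by
      simp [hj, Nat.cast_sub hklm.le]
    have hjD : D / δ < (j : ℝ) := by rw [hjr]; linarith
    set p : ℝ := r / j with hp
    have hpδ : |p| < δ := by
      rw [abs_of_nonneg (by positivity)]
      rw [hp, div_lt_iff₀ (by exact_mod_cast hjpos)]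
      have : D < δ * j := by
        have := (div_lt_iff₀ hδ0).1 hjD
        nlinarith
      linarith
    obtain ⟨x, hx, y, hy, hxy⟩ := hδmem p hpδ
    refine ⟨fun i => if (i : ℕ) < k then b else x, fun i => if (i : ℕ) < k then a else y,
      fun i => by dsimp only; split <;> assumption,
      fun i => by dsimp only; split <;> assumption, ?_⟩
    rw [sum_ite_const m k hklm.le, sum_ite_const m k hklm.le]
    have hjne : (j : ℝ) ≠ 0 := by exact_mod_cast hjpos.ne'
    have hjp : (j : ℝ) * p = r := by rw [hp]; field_simp
    rw [show (m - k : ℕ) = j from rfl]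
    have e1 : (k : ℝ) * b + (j : ℝ) * x - ((k : ℝ) * a + (j : ℝ) * y)
        = (k : ℝ) * (b - a) + (j : ℝ) * (x - y) := by ring
    rw [e1, hxy, ← hDba]
    linarith
  -- choose N
  obtain ⟨M, hM⟩ := exists_nat_gt (D ^ 2 / (2 * ε * δ))
  refine ⟨M + 1, fun n hn => ?_⟩
  set m : ℕ := 2 ^ (n - 1) with hmdef
  have hmM : D ^ 2 / (2 * ε * δ) < m := by
    have h1 : M ≤ n - 1 := by omega
    have h2 : n - 1 < 2 ^ (n - 1) := Nat.lt_two_pow_self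
    have : M < m := lt_of_le_of_lt h1 h2
    exact lt_trans hM (by exact_mod_cast this)
  have hcast : ((2 : ℝ) ^ (n - 1)) = (m : ℝ) := by push_cast [hmdef]; ring
  constructor
  · intro t ht
    rw [Set.mem_Icc, hcast] at ht
    obtain ⟨ht1, ht2⟩ := ht
    rcases le_or_gt 0 t with h0 | h0
    · exact key m hmM t h0 ht2
    · obtain ⟨f, g, hf, hg, hfg⟩ := key m hmM (-t) (by linarith) (by linarith)
      exact ⟨g, f, hg, hf, by linarith⟩
  · rintro t ⟨f, g, hf, hg, rfl⟩
    rw [Set.mem_Icc, hcast, ← abs_le]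
    have : (∑ i, f i) - ∑ i, g i = ∑ i : Fin m, (f i - g i) := by
      rw [Finset.sum_sub_distrib]
    rw [this]
    calc |∑ i : Fin m, (f i - g i)| ≤ ∑ i : Fin m, |f i - g i| := Finset.abs_sum_le_sum_abs _ _
      _ ≤ ∑ _i : Fin m, D := by
        apply Finset.sum_le_sum
        intro i _
        rw [hD, ← Real.dist_eq]
        exact Metric.dist_le_diam_of_mem hbdd (hf i) (hg i)
      _ = m * D := by simp [mul_comm]
end

section
/- Let K ⊆ ℝ^d be compact with K = -K and 0 ∈ K. Then Star(K), the union over directions θ ∈ S^{d-1} of the segments {tθ : 0 ≤ t ≤ r(θ)/2} where r(θ)/2 = sup{s ≥ 0 : [0,s]θ ⊆ K}, is the largest star-convex-with-respect-to-the-origin subset of K, and Star(K) is compact and path connected. -/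
theorem star_part
    {d : ℕ} (hd : 0 < d) (K : Set (EuclideanSpace ℝ (Fin d)))
    (hK : IsCompact K) (hsym : K = -K)
    (h0 : (0 : EuclideanSpace ℝ (Fin d)) ∈ K)
    (StarK : Set (EuclideanSpace ℝ (Fin d)))
    (hStar : StarK = ⋃ θ ∈ Metric.sphere (0 : EuclideanSpace ℝ (Fin d)) 1,
      { x | ∃ t : ℝ, 0 ≤ t ∧
        t ≤ sSup { s : ℝ | 0 ≤ s ∧ ∀ u ∈ Set.Icc (0:ℝ) s, u • θ ∈ K } ∧
        x = t • θ }) :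
    StarK ⊆ K ∧ StarConvex ℝ 0 StarK ∧
      (∀ A ⊆ K, StarConvex ℝ 0 A → A ⊆ StarK) ∧
      IsCompact StarK ∧ IsPathConnected StarK := by
  obtain ⟨M, hM⟩ := hK.isBounded.exists_norm_le
  have hKclosed : IsClosed K := hK.isClosed
  set Sθ : EuclideanSpace ℝ (Fin d) → Set ℝ :=
    fun θ => { s : ℝ | 0 ≤ s ∧ ∀ u ∈ Set.Icc (0:ℝ) s, u • θ ∈ K } with hSθ
  have hzero : ∀ θ, (0:ℝ) ∈ Sθ θ := by
    intro θ
    refine ⟨le_refl 0, fun u hu => ?_⟩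
    have : u = 0 := le_antisymm hu.2 hu.1
    simp [this, h0]
  have hbdd : ∀ θ ∈ Metric.sphere (0 : EuclideanSpace ℝ (Fin d)) 1,
      BddAbove (Sθ θ) := by
    intro θ hθ
    refine ⟨M, fun s hs => ?_⟩
    have hsK : s • θ ∈ K := hs.2 s ⟨hs.1, le_refl s⟩
    have := hM _ hsK
    rw [norm_smul] at this
    have hθ1 : ‖θ‖ = 1 := by simpa using hθ
    rwa [hθ1, mul_one, Real.norm_eq_abs, abs_of_nonneg hs.1] at this
  -- sSup (Sθ θ) ∈ Sθ θ
  have hsup_mem : ∀ θ ∈ Metric.sphere (0 : EuclideanSpace ℝ (Fin d)) 1,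
      sSup (Sθ θ) ∈ Sθ θ := by
    intro θ hθ
    set R := sSup (Sθ θ) with hR
    have hR0 : (0:ℝ) ≤ R := le_csSup (hbdd θ hθ) (hzero θ)
    refine ⟨hR0, fun u hu => ?_⟩
    rcases lt_or_eq_of_le hu.2 with hlt | heq
    · obtain ⟨s, hsS, hus⟩ := exists_lt_of_lt_csSup ⟨0, hzero θ⟩ hlt
      exact hsS.2 u ⟨hu.1, le_of_lt hus⟩
    · -- u = R: use closedness of K
      rcases eq_or_lt_of_le hR0 with hR0' | hRpos
      · have : u = 0 := by rw [heq, ← hR0']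
        simp [this, h0]
      · have hC : IsClosed {s : ℝ | s • θ ∈ K} :=
          hKclosed.preimage (continuous_id.smul continuous_const)
        have hsub : Set.Ico (0:ℝ) R ⊆ {s : ℝ | s • θ ∈ K} := by
          intro v hv
          obtain ⟨s, hsS, hvs⟩ := exists_lt_of_lt_csSup ⟨0, hzero θ⟩ hv.2
          exact hsS.2 v ⟨hv.1, le_of_lt hvs⟩
        have hRcl : R ∈ closure (Set.Ico (0:ℝ) R) := by
          rw [closure_Ico (ne_of_lt hRpos)]
          exact ⟨hR0, le_refl R⟩
        have : R ∈ {s : ℝ | s • θ ∈ K} :=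
          hC.closure_subset (closure_mono hsub hRcl)
        rw [heq]; exact this
  -- key characterization
  have hchar : StarK = { x | ∀ c ∈ Set.Icc (0:ℝ) 1, c • x ∈ K } := by
    ext x
    rw [hStar]
    simp only [Set.mem_iUnion, Set.mem_setOf_eq]
    constructor
    · rintro ⟨θ, hθ, t, ht0, htR, rfl⟩ c hc
      have hmem := hsup_mem θ hθ
      rw [smul_smul]
      refine hmem.2 (c * t) ⟨mul_nonneg hc.1 ht0, ?_⟩
      calc c * t ≤ 1 * t := mul_le_mul_of_nonneg_right hc.2 ht0
        _ = t := one_mul t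
        _ ≤ _ := htR
    · intro hx
      by_cases hx0 : x = 0
      · refine ⟨EuclideanSpace.single ⟨0, hd⟩ 1, ?_, 0, le_refl 0, ?_, by simp [hx0]⟩
        · simp [EuclideanSpace.norm_single]
        · have hθ : EuclideanSpace.single (⟨0, hd⟩ : Fin d) (1:ℝ) ∈
              Metric.sphere (0 : EuclideanSpace ℝ (Fin d)) 1 := by
            simp [EuclideanSpace.norm_single]
          exact le_csSup (hbdd _ hθ) (hzero _)
      · set θ := ‖x‖⁻¹ • x with hθdef
        have hxn : ‖x‖ ≠ 0 := norm_ne_zero_iff.mpr hx0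
        have hθ : θ ∈ Metric.sphere (0 : EuclideanSpace ℝ (Fin d)) 1 := by
          simp only [Metric.mem_sphere, dist_zero_right, hθdef]
          rw [norm_smul, norm_inv, norm_norm, inv_mul_cancel₀ hxn]
        refine ⟨θ, hθ, ‖x‖, norm_nonneg x, ?_, (smul_inv_smul₀ hxn x).symm⟩
        refine le_csSup (hbdd θ hθ) ⟨norm_nonneg x, fun u hu => ?_⟩
        rw [hθdef, smul_smul]
        refine hx (u * ‖x‖⁻¹) ⟨mul_nonneg hu.1 (inv_nonneg.mpr (norm_nonneg x)), ?_⟩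
        rw [← div_eq_mul_inv]
        exact div_le_one_of_le₀ hu.2 (norm_nonneg x)
  rw [hchar]
  set T := { x : EuclideanSpace ℝ (Fin d) | ∀ c ∈ Set.Icc (0:ℝ) 1, c • x ∈ K }
  have hTK : T ⊆ K := by
    intro x hx
    have := hx 1 ⟨zero_le_one, le_refl 1⟩
    simpa using this
  have h0T : (0 : EuclideanSpace ℝ (Fin d)) ∈ T := fun c _ => by simp [h0]
  have hTstar : StarConvex ℝ 0 T := by
    intro y hy a b ha hb hab
    simp only [smul_zero, zero_add]
    intro c hc
    rw [smul_smul]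
    exact hy (c * b) ⟨mul_nonneg hc.1 hb, by
      calc c * b ≤ 1 * 1 := mul_le_mul hc.2 (by linarith) hb zero_le_one
        _ = 1 := one_mul 1⟩
  have hTclosed : IsClosed T := by
    have : T = ⋂ c ∈ Set.Icc (0:ℝ) 1, (fun x : EuclideanSpace ℝ (Fin d) => c • x) ⁻¹' K := by
      ext x; simp [T, Set.mem_iInter]
    rw [this]
    exact isClosed_biInter fun c _ => hKclosed.preimage (continuous_const_smul c)
  refine ⟨hTK, hTstar, ?_, ?_, ?_⟩
  · intro A hAK hAstar x hx
    intro c hc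
    have : c • x ∈ A := by
      have := hAstar hx (by linarith [hc.2] : (0:ℝ) ≤ 1 - c) hc.1 (by ring)
      simpa using this
    exact hAK this
  · exact Metric.isCompact_of_isClosed_isBounded hTclosed (hK.isBounded.subset hTK)
  · have hcontr : ContractibleSpace T := hTstar.contractibleSpace ⟨0, h0T⟩
    rw [isPathConnected_iff_pathConnectedSpace]
    infer_instance
end

section
/- Let K₀ ⊆ ℝ^d be compact with positive Lebesgue measure and diameter D, K_n the Banach–Steinhaus process, and r > 0 the diameter of the largest closed ball centered at the origin contained in K₁. Then for all n ≥ max(log₂(2Dd/r), log₂(d(d+1))), we have (1/2)·Conv(K₁) ⊆ K_{n+1} ⊆ Conv(K₁). -/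
open scoped Pointwise ENNReal

open MeasureTheory

private def sumn {E : Type*} [AddCommMonoid E] (A : Set E) : ℕ → Set E
  | 0 => {0}
  | m + 1 => sumn A m + A

private lemma sumn_add {E : Type*} [AddCommMonoid E] (A : Set E) (a b : ℕ) :
    sumn A (a + b) = sumn A a + sumn A b := by
  induction b with
  | zero => simp [sumn, Set.add_singleton]
  | succ b ih => rw [← Nat.add_assoc, sumn, sumn, ih, add_assoc]

private lemma smul_mem_sumn {E : Type*} [AddCommGroup E] [Module ℝ E] {A : Set E} {v : E}
    (hv : v ∈ A) : ∀ m : ℕ, ((m : ℝ) • v) ∈ sumn A m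
  | 0 => by simp [sumn]
  | m + 1 => by
      have h := smul_mem_sumn hv m
      have : ((m + 1 : ℕ) : ℝ) • v = (m : ℝ) • v + v := by
        push_cast; rw [add_smul, one_smul]
      rw [sumn, this]
      exact Set.add_mem_add h hv

private lemma sum_smul_mem_sumn {E : Type*} [AddCommGroup E] [Module ℝ E] {A : Set E}
    (m : E → ℕ) (t : Finset E) (ht : ↑t ⊆ A) :
    (∑ v ∈ t, (m v : ℝ) • v) ∈ sumn A (∑ v ∈ t, m v) := by
  induction t using Finset.cons_induction_on with
  | empty => simp [sumn]
  | cons _ _ ha ih =>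
      rw [Finset.sum_cons, Finset.sum_cons, sumn_add]
      refine Set.add_mem_add (smul_mem_sumn (ht ?_) (m _)) (ih (fun x hx => ht ?_))
      · exact Finset.mem_cons_self _ _
      · exact Finset.mem_cons_of_mem hx

private lemma ball_subset_sumn {E : Type*} [NormedAddCommGroup E] [NormedSpace ℝ E]
    [ProperSpace E] {A : Set E} {ρ : ℝ} (hρ : 0 ≤ ρ) (hA : Metric.closedBall 0 ρ ⊆ A) :
    ∀ m : ℕ, Metric.closedBall (0 : E) (m * ρ) ⊆ sumn A m
  | 0 => by simp [sumn]
  | m + 1 => by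
      have ih := ball_subset_sumn hρ hA m
      have heq : Metric.closedBall (0 : E) ((m + 1 : ℕ) * ρ)
          = Metric.closedBall (0 : E) (m * ρ) + Metric.closedBall (0 : E) ρ := by
        rw [closedBall_add_closedBall (by positivity) hρ]
        norm_num [add_mul]
      rw [sumn, heq]
      exact Set.add_subset_add ih hA

theorem BS_half_hull
    {d : ℕ} (K : ℕ → Set (EuclideanSpace ℝ (Fin d)))
    (hcpt : IsCompact (K 0)) (hpos : 0 < volume (K 0)) (D : ℝ)
    (hD : D = Metric.diam (K 0))
    (hK : ∀ n, K (n + 1) = (2⁻¹ : ℝ) • (K n - K n))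
    (r : ℝ) (hr : 0 < r)
    (hball : Metric.closedBall (0 : EuclideanSpace ℝ (Fin d)) (r / 2) ⊆ K 1)
    (hmax : ∀ s : ℝ, Metric.closedBall (0 : EuclideanSpace ℝ (Fin d)) (s / 2) ⊆ K 1 → s ≤ r) :
    ∀ n : ℕ, max (Real.logb 2 (2 * D * d / r)) (Real.logb 2 (d * (d + 1))) ≤ n →
      (2⁻¹ : ℝ) • convexHull ℝ (K 1) ⊆ K (n + 1) ∧ K (n + 1) ⊆ convexHull ℝ (K 1) := by
  intro n hn
  set C := convexHull ℝ (K 1) with hC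
  have h0K1 : (0 : EuclideanSpace ℝ (Fin d)) ∈ K 1 :=
    hball (Metric.mem_closedBall_self (by positivity))
  have hKsym : ∀ m, -(K (m + 1)) = K (m + 1) := by
    intro m
    rw [hK m]
    ext x
    simp only [Set.mem_neg, Set.mem_smul_set, Set.mem_sub]
    constructor
    · rintro ⟨y, ⟨a, ha, b, hb, rfl⟩, hxy⟩
      exact ⟨b - a, ⟨b, hb, a, ha, rfl⟩, by rw [← neg_sub a b, smul_neg, hxy, neg_neg]⟩
    · rintro ⟨y, ⟨a, ha, b, hb, rfl⟩, rfl⟩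
      exact ⟨b - a, ⟨b, hb, a, ha, rfl⟩, by rw [← neg_sub a b, smul_neg]⟩
  have hCsym : ∀ x ∈ C, -x ∈ C := by
    intro x hx
    have h1 : -C = C := by rw [hC, ← convexHull_neg, hKsym 0]
    rw [← h1]
    exact Set.neg_mem_neg.2 hx
  have hupper : ∀ m, K (m + 1) ⊆ C := by
    intro m
    induction m with
    | zero => exact subset_convexHull ℝ _
    | succ m ih =>
        rw [hK (m + 1)]
        rintro x ⟨y, hy, rfl⟩
        obtain ⟨a, ha, b, hb, rfl⟩ := hy
        have hmem := (convex_convexHull ℝ (K 1)) (ih ha) (hCsym b (ih hb))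
          (by norm_num : (0:ℝ) ≤ 2⁻¹) (by norm_num : (0:ℝ) ≤ 2⁻¹) (by norm_num)
        show (2⁻¹ : ℝ) • (a - b) ∈ C
        rw [smul_sub, sub_eq_add_neg, ← smul_neg]
        exact hmem
  refine ⟨?_, hupper n⟩
  have hDnn : 0 ≤ D := hD ▸ Metric.diam_nonneg
  have h0Km : ∀ m, (0 : EuclideanSpace ℝ (Fin d)) ∈ K (m + 1) := by
    intro m
    induction m with
    | zero => exact h0K1
    | succ m ih =>
        rw [hK (m + 1)]
        exact ⟨0 - 0, ⟨0, ih, 0, ih, rfl⟩, by simp⟩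
  rcases Nat.eq_zero_or_pos d with hd0 | hd1
  · subst hd0
    haveI : Subsingleton (EuclideanSpace ℝ (Fin 0)) := by
      refine ⟨fun a b => ?_⟩
      ext i
      exact absurd i.2 (by simp)
    intro x _
    rw [Subsingleton.elim x (0 : EuclideanSpace ℝ (Fin 0))]
    exact h0Km n
  have hdR : (1 : ℝ) ≤ d := by exact_mod_cast hd1
  have hDpos : 0 < D := by
    rcases lt_or_eq_of_le hDnn with h | h
    · exact h
    · exfalso
      have hsub : (K 0).Subsingleton := by
        intro a ha b hb
        have h2 := Metric.dist_le_diam_of_mem hcpt.isBounded ha hb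
        rw [← hD, ← h] at h2
        exact dist_le_zero.1 h2
      haveI : Nontrivial (EuclideanSpace ℝ (Fin d)) := by
        have h1 : 0 < Module.finrank ℝ (EuclideanSpace ℝ (Fin d)) := by
          rw [finrank_euclideanSpace_fin]; exact hd1
        exact Module.nontrivial_of_finrank_pos h1
      have h3 : volume (K 0) = 0 := by
        rcases Set.Subsingleton.eq_empty_or_singleton hsub with h' | ⟨a, h'⟩
        · rw [h']; simp
        · rw [h']; exact measure_singleton a
      rw [h3] at hpos; exact lt_irrefl _ hpos
  have h2n_b : (d * (d + 1) : ℝ) ≤ 2 ^ n := by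
    have hlog := le_trans (le_max_right _ _) hn
    have hx : (0:ℝ) < d * (d + 1) := by positivity
    have := (Real.logb_le_iff_le_rpow (by norm_num) hx).1 hlog
    rwa [Real.rpow_natCast] at this
  have h2n_a : (2 * D * d / r : ℝ) ≤ 2 ^ n := by
    have hlog := le_trans (le_max_left _ _) hn
    have hx : (0:ℝ) < 2 * D * d / r := by positivity
    have := (Real.logb_le_iff_le_rpow (by norm_num) hx).1 hlog
    rwa [Real.rpow_natCast] at this
  have hn1 : 1 ≤ n := by
    by_contra h
    push_neg at h
    interval_cases n
    · have h4 : (2:ℝ) ≤ 2 ^ 0 := le_trans (by nlinarith) h2n_b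
      norm_num at h4
  obtain ⟨p, rfl⟩ : ∃ p, n = p + 1 := ⟨n - 1, (Nat.succ_pred_eq_of_pos hn1).symm⟩
  -- averaging: sumn ⊆ K
  have havg : ∀ m : ℕ, ((2 ^ m : ℝ))⁻¹ • sumn (K 1) (2 ^ m) ⊆ K (m + 1) := by
    intro m
    induction m with
    | zero =>
        rintro x ⟨y, hy, rfl⟩
        show ((2 ^ 0 : ℝ))⁻¹ • y ∈ K 1
        have h1 : sumn (K 1) (2 ^ 0) = K 1 := by
          show ({0} : Set (EuclideanSpace ℝ (Fin d))) + K 1 = K 1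
          simp [Set.singleton_add]
        rw [h1] at hy
        simpa using hy
    | succ m ih =>
        rintro x ⟨y, hy, rfl⟩
        show ((2 ^ (m + 1) : ℝ))⁻¹ • y ∈ K (m + 1 + 1)
        rw [show 2 ^ (m + 1) = 2 ^ m + 2 ^ m from by ring, sumn_add] at hy
        obtain ⟨u, hu, v, hv, rfl⟩ := hy
        have ha : ((2 ^ m : ℝ))⁻¹ • u ∈ K (m + 1) := ih (Set.smul_mem_smul_set hu)
        have hb : -(((2 ^ m : ℝ))⁻¹ • v) ∈ K (m + 1) := by
          rw [← hKsym m]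
          exact Set.neg_mem_neg.2 (ih (Set.smul_mem_smul_set hv))
        have heq : ((2 ^ (m + 1) : ℝ))⁻¹ • (u + v)
            = (2⁻¹ : ℝ) • (((2 ^ m : ℝ))⁻¹ • u - (-(((2 ^ m : ℝ))⁻¹ • v))) := by
          rw [sub_neg_eq_add, ← smul_add, smul_smul, ← mul_inv, ← pow_succ']
        rw [heq, hK (m + 1)]
        exact Set.smul_mem_smul_set (Set.sub_mem_sub ha hb)
  have hnormK1 : ∀ y ∈ K 1, ‖y‖ ≤ D / 2 := by
    intro y hy
    rw [hK 0] at hy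
    obtain ⟨z, ⟨a, ha, b, hb, rfl⟩, rfl⟩ := hy
    have h2 := Metric.dist_le_diam_of_mem hcpt.isBounded ha hb
    rw [dist_eq_norm, ← hD] at h2
    rw [norm_smul]
    have : ‖(2⁻¹ : ℝ)‖ = 2⁻¹ := by norm_num
    rw [this]
    linarith
  -- the key claim
  have hkey : ∀ y ∈ C, ((2 ^ p : ℝ)) • y ∈ sumn (K 1) (2 ^ (p + 1)) := by
    intro y hy
    rw [hC, convexHull_eq_union] at hy
    simp only [Set.mem_iUnion] at hy
    obtain ⟨t, hts, hti, hyt⟩ := hy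
    have hcard : t.card ≤ d + 1 := by
      have h1 := hti.card_le_finrank_succ
      have h2 : Module.finrank ℝ (vectorSpan ℝ (Set.range ((↑) : t → EuclideanSpace ℝ (Fin d))))
          ≤ d := by
        refine le_trans (Submodule.finrank_le _) ?_
        rw [finrank_euclideanSpace_fin]
      rw [Fintype.card_coe] at h1
      omega
    rw [Finset.convexHull_eq] at hyt
    obtain ⟨w, hw0, hw1, hwy⟩ := hyt
    rw [Finset.centerMass_eq_of_sum_1 _ _ hw1] at hwy
    simp only [id] at hwy
    set M : ℕ := 2 ^ p with hM
    set N : ℕ := 2 ^ (p + 1) with hN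
    have hMR : ((M : ℕ) : ℝ) = (2 : ℝ) ^ p := by rw [hM]; push_cast; ring
    have hNM : N = M + M := by rw [hN, hM]; ring
    set m : EuclideanSpace ℝ (Fin d) → ℕ := fun v => ⌊(M : ℝ) * w v⌋₊ with hm
    set T := ∑ v ∈ t, m v with hT
    have hfl_le : ∀ v ∈ t, (m v : ℝ) ≤ (M : ℝ) * w v := fun v hv =>
      Nat.floor_le (mul_nonneg (by positivity) (hw0 v hv))
    have hfl_lt : ∀ v ∈ t, (M : ℝ) * w v < m v + 1 := fun v _ => Nat.lt_floor_add_one _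
    have hTle : (T : ℝ) ≤ M := by
      rw [hT]
      push_cast
      calc (∑ v ∈ t, (m v : ℝ)) ≤ ∑ v ∈ t, (M : ℝ) * w v := Finset.sum_le_sum hfl_le
        _ = M := by rw [← Finset.mul_sum, hw1, mul_one]
    have hTM : T ≤ M := by exact_mod_cast hTle
    set td := M - T with htd
    have htdR : (td : ℝ) = (M : ℝ) - T := by rw [htd]; push_cast [hTM]; ring
    have htne : t.Nonempty := by
      rcases Finset.eq_empty_or_nonempty t with h | h
      · rw [h] at hw1; simp at hw1
      · exact h
    have hsum_eq : ((M : ℝ)) - T = ∑ v ∈ t, ((M : ℝ) * w v - m v) := by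
      rw [Finset.sum_sub_distrib, ← Finset.mul_sum, hw1, mul_one, hT]
      push_cast
      ring
    have htdlt : (td : ℝ) < t.card := by
      rw [htdR, hsum_eq]
      calc (∑ v ∈ t, ((M : ℝ) * w v - m v)) < ∑ _v ∈ t, (1 : ℝ) :=
            Finset.sum_lt_sum_of_nonempty htne (fun v hv => by linarith [hfl_lt v hv])
        _ = t.card := by simp
    have htdd : td ≤ d := by
      have h5 : (td : ℝ) < (d : ℝ) + 1 := lt_of_lt_of_le htdlt (by exact_mod_cast hcard)
      have h6 : td < d + 1 := by exact_mod_cast h5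
      omega
    set z := ∑ v ∈ t, ((M : ℝ) * w v - m v) • v with hz
    have hdecomp : ((M : ℝ)) • y = (∑ v ∈ t, (m v : ℝ) • v) + z := by
      rw [← hwy, Finset.smul_sum, hz, ← Finset.sum_add_distrib]
      refine Finset.sum_congr rfl fun v _ => ?_
      rw [smul_smul, ← add_smul]
      ring_nf
    have hP : (∑ v ∈ t, (m v : ℝ) • v) ∈ sumn (K 1) T := sum_smul_mem_sumn _ t hts
    have hNsplit : N - T = M + td := by omega
    have hnz : ‖z‖ ≤ (td : ℝ) * (D / 2) := by
      calc ‖z‖ ≤ ∑ v ∈ t, ‖((M : ℝ) * w v - m v) • v‖ := norm_sum_le _ _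
        _ ≤ ∑ v ∈ t, ((M : ℝ) * w v - m v) * (D / 2) := by
            refine Finset.sum_le_sum fun v hv => ?_
            rw [norm_smul, Real.norm_eq_abs, abs_of_nonneg (by linarith [hfl_le v hv])]
            exact mul_le_mul_of_nonneg_left (hnormK1 v (hts hv))
              (by linarith [hfl_le v hv])
        _ = (td : ℝ) * (D / 2) := by
            rw [← Finset.sum_mul, ← hsum_eq, htdR]
    have hdDMr : (d : ℝ) * D ≤ (M : ℝ) * r := by
      have h7 : 2 * D * d / r ≤ 2 * M := by
        rw [hMR]
        calc 2 * D * (d:ℝ) / r ≤ 2 ^ (p + 1) := h2n_a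
          _ = 2 * 2 ^ p := by ring
      have h8 : 2 * D * d ≤ 2 * M * r := by
        have := (div_le_iff₀ hr).1 h7
        linarith
      linarith
    have hzball : z ∈ Metric.closedBall (0 : EuclideanSpace ℝ (Fin d)) ((N - T : ℕ) * (r / 2)) := by
      rw [Metric.mem_closedBall, dist_zero_right]
      refine le_trans hnz ?_
      have h9 : ((N - T : ℕ) : ℝ) = (M : ℝ) + td := by rw [hNsplit]; push_cast; ring
      rw [h9]
      have h10 : (td : ℝ) ≤ d := by exact_mod_cast htdd
      have h11 : (td : ℝ) * D ≤ (M : ℝ) * r := by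
        calc (td : ℝ) * D ≤ (d : ℝ) * D := mul_le_mul_of_nonneg_right h10 hDnn
          _ ≤ (M : ℝ) * r := hdDMr
      have h12 : (0 : ℝ) ≤ td := Nat.cast_nonneg _
      nlinarith
    have hzmem : z ∈ sumn (K 1) (N - T) :=
      ball_subset_sumn (by positivity) hball (N - T) hzball
    have hTN : T + (N - T) = N := by omega
    have hgoal : ((M : ℝ)) • y ∈ sumn (K 1) N := by
      rw [← hTN, sumn_add, hdecomp]
      exact Set.add_mem_add hP hzmem
    rw [← hMR]
    exact hgoal
  rintro x ⟨y, hy, rfl⟩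
  show (2⁻¹ : ℝ) • y ∈ K (p + 1 + 1)
  have heq : (2⁻¹ : ℝ) • y = ((2 ^ (p + 1) : ℝ))⁻¹ • (((2 ^ p : ℝ)) • y) := by
    rw [smul_smul, pow_succ']
    rw [mul_inv, mul_assoc, inv_mul_cancel₀ (by positivity), mul_one]
  rw [heq]
  exact havg (p + 1) (Set.smul_mem_smul_set (hkey y hy))
end
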